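/- arXiv:1401.0218 — 5 statements merged into one kernel-verified Lean document; each statement's English description precedes it below -/
import Mathlib

section
/- Let (X_j)_{j≥1} be i.i.d. nonnegative real random variables with E[X_1] > 0 and E[exp(λ₀ X_1)] < ∞ for some λ₀ > 0. Let S_n = X_1 + ... + X_n (with S_0 = 0) and, for x ≥ 0, let τ_x = inf{n ≥ 0 : S_n ≥ x}. Then there exists a constant C > 0 (depending only on the law of X_1 and on λ₀) such that for all x ≥ 0 and all α > 0, P[S_{τ_x} − x ≥ α] ≤ C·exp(−λ₀ α). -/
open MeasureTheory ProbabilityTheory Filter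

private lemma meas_le_lintegral_one_le {Ω : Type*} [MeasureSpace Ω] {s : Set Ω}
    {h : Ω → ENNReal} (hh : Measurable h) (h1 : ∀ ω ∈ s, 1 ≤ h ω) :
    ℙ s ≤ ∫⁻ ω, h ω ∂ℙ := by
  calc ℙ s = ∫⁻ _ in s, 1 ∂ℙ := (setLIntegral_one s).symm
    _ ≤ ∫⁻ ω in s, h ω ∂ℙ := setLIntegral_mono hh h1
    _ ≤ ∫⁻ ω, h ω ∂ℙ := setLIntegral_le_lintegral s h

/-- Overshoot bound: for an i.i.d. nonnegative random walk with positive mean and a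
finite exponential moment of order `lam0 > 0`, the overshoot over any level `x ≥ 0`
has a tail bounded by `C * exp (-lam0 * α)`, uniformly in `x`. -/
theorem overshoot_tail_bound
    {Ω : Type*} [MeasureSpace Ω] [IsProbabilityMeasure (ℙ : Measure Ω)]
    (X : ℕ → Ω → ℝ)
    (hmeas : ∀ j, Measurable (X j))
    (hindep : iIndepFun X ℙ)
    (hident : ∀ j, IdentDistrib (X j) (X 0) ℙ ℙ)
    (hnonneg : ∀ j ω, 0 ≤ X j ω)
    (hmean : 0 < ∫ ω, X 0 ω ∂ℙ)
    (lam0 : ℝ) (hlam0 : 0 < lam0)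
    (hexp : Integrable (fun ω => Real.exp (lam0 * X 0 ω)) ℙ)
    (S : ℕ → Ω → ℝ) (hS : ∀ n ω, S n ω = ∑ j ∈ Finset.range n, X j ω)
    (τ : ℝ → Ω → ℕ) (hτ : ∀ x ω, τ x ω = sInf {n : ℕ | x ≤ S n ω}) :
    ∃ C > 0, ∀ x ≥ (0:ℝ), ∀ α > (0:ℝ),
      ℙ {ω | α ≤ S (τ x ω) ω - x} ≤ ENNReal.ofReal (C * Real.exp (-lam0 * α)) := by
  classical
  have hS0 : ∀ ω, S 0 ω = 0 := by intro ω; rw [hS]; simp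
  have hSsucc : ∀ n ω, S (n+1) ω = S n ω + X n ω := by
    intro n ω; rw [hS, hS, Finset.sum_range_succ]
  have hSmeas : ∀ n, Measurable (S n) := by
    intro n
    have h : S n = fun ω => ∑ j ∈ Finset.range n, X j ω := funext (hS n)
    rw [h]; exact Finset.measurable_sum _ fun i _ => hmeas i
  have hSmono : ∀ (i j : ℕ), i ≤ j → ∀ ω, S i ω ≤ S j ω := by
    intro i j hij ω
    rw [hS, hS]
    exact Finset.sum_le_sum_of_subset_of_nonneg (Finset.range_subset_range.2 hij)
      (fun k _ _ => hnonneg k ω)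
  -- the exponential weight function
  set g : ℝ → ENNReal := fun t => ENNReal.ofReal (Real.exp (-lam0 * t)) with hgdef
  have hgmeas : Measurable g :=
    ENNReal.measurable_ofReal.comp (Real.measurable_exp.comp (measurable_const.mul measurable_id))
  have hident_lint : ∀ (φ : ℝ → ENNReal), Measurable φ → ∀ i,
      ∫⁻ ω, φ (X i ω) ∂ℙ = ∫⁻ ω, φ (X 0 ω) ∂ℙ := by
    intro φ hφ i
    rw [← lintegral_map hφ (hmeas i), (hident i).map_eq, lintegral_map hφ (hmeas 0)]
  set ψ : ENNReal := ∫⁻ ω, g (X 0 ω) ∂ℙ with hψdef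
  have hψlt : ψ < 1 := by
    have hf : Measurable fun ω => Real.exp (-lam0 * X 0 ω) :=
      Real.measurable_exp.comp (measurable_const.mul (hmeas 0))
    have hle1 : ∀ ω, Real.exp (-lam0 * X 0 ω) ≤ 1 := by
      intro ω
      rw [Real.exp_le_one_iff]
      have := hnonneg 0 ω
      nlinarith
    have hfi : Integrable (fun ω => Real.exp (-lam0 * X 0 ω)) ℙ := by
      refine (integrable_const (1:ℝ)).mono' hf.aestronglyMeasurable ?_
      filter_upwards with ω
      rw [Real.norm_eq_abs, abs_of_pos (Real.exp_pos _)]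
      exact hle1 ω
    have hψr : ψ = ENNReal.ofReal (∫ ω, Real.exp (-lam0 * X 0 ω) ∂ℙ) := by
      rw [hψdef, hgdef, ofReal_integral_eq_lintegral_ofReal hfi
        (Filter.Eventually.of_forall fun ω => (Real.exp_pos _).le)]
    have hne : 0 < ℙ {ω | X 0 ω ≠ 0} := by
      by_contra h
      push_neg at h
      have h0 : ℙ {ω | X 0 ω ≠ 0} = 0 := le_antisymm h zero_le
      have hae : X 0 =ᵐ[ℙ] (fun _ => (0:ℝ)) := by
        rw [Filter.EventuallyEq, ae_iff]
        simpa using h0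
      have : ∫ ω, X 0 ω ∂ℙ = 0 := by
        rw [integral_congr_ae hae]; simp
      rw [this] at hmean; exact lt_irrefl 0 hmean
    have hsub : {ω | X 0 ω ≠ 0} ⊆ Function.support fun ω => 1 - Real.exp (-lam0 * X 0 ω) := by
      intro ω hω
      have hx0 : 0 < X 0 ω := lt_of_le_of_ne (hnonneg 0 ω) (Ne.symm hω)
      have : Real.exp (-lam0 * X 0 ω) < 1 := by
        rw [Real.exp_lt_one_iff]; nlinarith
      simp only [Function.mem_support]
      intro hcon
      nlinarith [hcon]
    have hintg : Integrable (fun ω => 1 - Real.exp (-lam0 * X 0 ω)) ℙ :=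
      (integrable_const (1:ℝ)).sub hfi
    have hipos : 0 < ∫ ω, (1 - Real.exp (-lam0 * X 0 ω)) ∂ℙ := by
      rw [integral_pos_iff_support_of_nonneg_ae
        (Filter.Eventually.of_forall fun ω => by have := hle1 ω; simp only [Pi.zero_apply]; linarith)
        hintg]
      exact lt_of_lt_of_le hne (measure_mono hsub)
    have hint1 : ∫ ω, (1 - Real.exp (-lam0 * X 0 ω)) ∂ℙ
        = 1 - ∫ ω, Real.exp (-lam0 * X 0 ω) ∂ℙ := by
      rw [integral_sub (integrable_const (1:ℝ)) hfi]
      simp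
    rw [hψr]
    refine lt_of_lt_of_le (ENNReal.ofReal_lt_one.2 ?_) le_rfl
    rw [hint1] at hipos
    linarith
  set Mgf : ENNReal := ∫⁻ ω, ENNReal.ofReal (Real.exp (lam0 * X 0 ω)) ∂ℙ with hMdef
  have hMfin : Mgf ≠ ⊤ := by
    have h := hexp.2
    rw [hasFiniteIntegral_iff_ofReal
      (Filter.Eventually.of_forall fun ω => (Real.exp_pos _).le)] at h
    exact h.ne
  have htail : ∀ (i : ℕ) (t : ℝ), ℙ {ω | t ≤ X i ω}
      ≤ Mgf * ENNReal.ofReal (Real.exp (-lam0 * t)) := by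
    intro i t
    have hm : Measurable fun ω => ENNReal.ofReal (Real.exp (lam0 * X i ω)) :=
      ENNReal.measurable_ofReal.comp (Real.measurable_exp.comp (measurable_const.mul (hmeas i)))
    have h := meas_le_lintegral_one_le (s := {ω | t ≤ X i ω})
      (h := fun ω => ENNReal.ofReal (Real.exp (-lam0 * t)) *
        ENNReal.ofReal (Real.exp (lam0 * X i ω)))
      (measurable_const.mul hm) ?_
    · replace h : ℙ {ω | t ≤ X i ω} ≤ ∫⁻ ω, ENNReal.ofReal (Real.exp (-lam0 * t)) *
        ENNReal.ofReal (Real.exp (lam0 * X i ω)) ∂ℙ := h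
      have hMi := hident_lint (fun s => ENNReal.ofReal (Real.exp (lam0 * s)))
          (ENNReal.measurable_ofReal.comp (Real.measurable_exp.comp
            (measurable_const.mul measurable_id))) i
      rw [lintegral_const_mul _ hm, hMi] at h
      rw [mul_comm]
      exact h
    · intro ω hω
      simp only [Set.mem_setOf_eq] at hω
      show 1 ≤ ENNReal.ofReal (Real.exp (-lam0 * t)) * ENNReal.ofReal (Real.exp (lam0 * X i ω))
      rw [← ENNReal.ofReal_mul (Real.exp_pos _).le, ← Real.exp_add]
      refine ENNReal.one_le_ofReal.2 ?_
      rw [← Real.exp_zero]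
      exact Real.exp_le_exp.2 (by nlinarith)
  have hblock : ∀ (j d : ℕ), ∫⁻ ω, g (∑ i ∈ Finset.Ico j (j+d), X i ω) ∂ℙ = ψ ^ d := by
    intro j d
    induction d with
    | zero => simp [hgdef]
    | succ d ih =>
      have hm : Measurable fun ω => ∑ i ∈ Finset.Ico j (j+d), X i ω :=
        Finset.measurable_sum _ fun i _ => hmeas i
      have hgm : ∀ ω, g (∑ i ∈ Finset.Ico j (j+(d+1)), X i ω)
          = g (∑ i ∈ Finset.Ico j (j+d), X i ω) * g (X (j+d) ω) := by
        intro ω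
        have hsum : (∑ i ∈ Finset.Ico j (j+(d+1)), X i ω)
            = (∑ i ∈ Finset.Ico j (j+d), X i ω) + X (j+d) ω := by
          rw [show j + (d+1) = (j+d) + 1 from rfl]
          exact Finset.sum_Ico_succ_top (Nat.le_add_right j d) _
        rw [hsum, hgdef]
        simp only
        rw [← ENNReal.ofReal_mul (Real.exp_pos _).le, ← Real.exp_add]
        ring_nf
      have hind : IndepFun (fun ω => ∑ i ∈ Finset.Ico j (j+d), X i ω) (X (j+d)) ℙ := by
        have h := hindep.indepFun_finsetSum_of_notMem hmeas
          (s := Finset.Ico j (j+d)) (i := j+d) (by simp)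
        have heq : (∑ i ∈ Finset.Ico j (j+d), X i) = fun ω => ∑ i ∈ Finset.Ico j (j+d), X i ω := by
          ext ω; simp [Finset.sum_apply]
        rwa [heq] at h
      have hind2 : IndepFun (fun ω => g (∑ i ∈ Finset.Ico j (j+d), X i ω))
          (fun ω => g (X (j+d) ω)) ℙ := hind.comp hgmeas hgmeas
      calc ∫⁻ ω, g (∑ i ∈ Finset.Ico j (j+(d+1)), X i ω) ∂ℙ
          = ∫⁻ ω, g (∑ i ∈ Finset.Ico j (j+d), X i ω) * g (X (j+d) ω) ∂ℙ :=
            lintegral_congr fun ω => hgm ω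
        _ = (∫⁻ ω, g (∑ i ∈ Finset.Ico j (j+d), X i ω) ∂ℙ) * ∫⁻ ω, g (X (j+d) ω) ∂ℙ :=
            lintegral_mul_eq_lintegral_mul_lintegral_of_indepFun''
              (hgmeas.comp hm).aemeasurable (hgmeas.comp (hmeas (j+d))).aemeasurable hind2
        _ = ψ ^ d * ψ := by rw [ih, hident_lint g hgmeas]
        _ = ψ ^ (d+1) := (pow_succ ψ d).symm
  have hblockP : ∀ (j d : ℕ), ℙ {ω | (∑ i ∈ Finset.Ico j (j+d), X i ω) ≤ 1}
      ≤ ENNReal.ofReal (Real.exp lam0) * ψ ^ d := by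
    intro j d
    have hm : Measurable fun ω => ∑ i ∈ Finset.Ico j (j+d), X i ω :=
      Finset.measurable_sum _ fun i _ => hmeas i
    have h := meas_le_lintegral_one_le (s := {ω | (∑ i ∈ Finset.Ico j (j+d), X i ω) ≤ 1})
      (h := fun ω => ENNReal.ofReal (Real.exp lam0) * g (∑ i ∈ Finset.Ico j (j+d), X i ω))
      (measurable_const.mul (hgmeas.comp hm)) ?_
    · have hgm2 : Measurable fun ω => g (∑ i ∈ Finset.Ico j (j+d), X i ω) := hgmeas.comp hm
      replace h : ℙ {ω | (∑ i ∈ Finset.Ico j (j+d), X i ω) ≤ 1} ≤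
          ∫⁻ ω, ENNReal.ofReal (Real.exp lam0) * g (∑ i ∈ Finset.Ico j (j+d), X i ω) ∂ℙ := h
      rwa [lintegral_const_mul _ hgm2, hblock j d] at h
    · intro ω hω
      simp only [Set.mem_setOf_eq] at hω
      show 1 ≤ ENNReal.ofReal (Real.exp lam0) * g (∑ i ∈ Finset.Ico j (j+d), X i ω)
      rw [hgdef]
      simp only
      rw [← ENNReal.ofReal_mul (Real.exp_pos _).le, ← Real.exp_add]
      refine ENNReal.one_le_ofReal.2 ?_
      rw [← Real.exp_zero]
      exact Real.exp_le_exp.2 (by nlinarith)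
  -- constants
  set r2 : ENNReal := ENNReal.ofReal (Real.exp (-lam0)) with hr2def
  have hr2lt : r2 < 1 := by
    rw [hr2def]
    exact ENNReal.ofReal_lt_one.2 (Real.exp_lt_one_iff.2 (by linarith))
  set K : ENNReal := ENNReal.ofReal (Real.exp lam0) * Mgf * (1 - ψ)⁻¹ * (1 - r2)⁻¹ with hKdef
  have hKfin : K ≠ ⊤ := by
    refine ENNReal.mul_ne_top (ENNReal.mul_ne_top (ENNReal.mul_ne_top ENNReal.ofReal_ne_top hMfin) ?_) ?_
    · exact ENNReal.inv_ne_top.2 (by simp [tsub_eq_zero_iff_le, not_le, hψlt])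
    · exact ENNReal.inv_ne_top.2 (by simp [tsub_eq_zero_iff_le, not_le, hr2lt])
  refine ⟨K.toReal + 1, by positivity, ?_⟩
  intro x hx α hα
  -- the first-crossing sets
  set D : ℕ → ℝ → Set Ω := fun j c => {ω | c < S j ω ∧ ∀ i < j, S i ω ≤ c} with hDdef
  have hDmeas : ∀ (j : ℕ) (c : ℝ), MeasurableSet (D j c) := by
    intro j c
    have hrw : D j c = {ω | c < S j ω} ∩ ⋂ i, ⋂ (_ : i < j), {ω | S i ω ≤ c} := by
      ext ω; simp [hDdef, Set.mem_iInter]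
    rw [hrw]
    exact (measurableSet_lt measurable_const (hSmeas j)).inter
      (MeasurableSet.iInter fun i => MeasurableSet.iInter fun _ =>
        measurableSet_le (hSmeas i) measurable_const)
  have hDsum : ∀ c : ℝ, ∑' (j : ℕ), ℙ (D j c) ≤ 1 := by
    intro c
    have hdisj : Pairwise (Function.onFun Disjoint (fun j => D j c)) := by
      intro i j hij
      rcases hij.lt_or_gt with h | h
      · exact Set.disjoint_left.2 fun ω hi hj => absurd (hj.2 i h) (not_le.2 hi.1)
      · exact Set.disjoint_left.2 fun ω hi hj => absurd (hi.2 j h) (not_le.2 hj.1)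
    calc ∑' (j : ℕ), ℙ (D j c) ≤ ℙ Set.univ :=
          tsum_measure_le_measure_univ (fun j => (hDmeas j c).nullMeasurableSet)
            (hdisj.mono fun i j h => h.aedisjoint)
      _ = 1 := measure_univ
  -- covering
  have hcover : {ω | α ≤ S (τ x ω) ω - x} ⊆
      ⋃ (j : ℕ) (d : ℕ) (k : ℕ), (D j (x - k - 1) ∩
        {ω | (∑ i ∈ Finset.Ico j (j+d), X i ω) ≤ 1 ∧ α + k ≤ X (j+d) ω}) := by
    intro ω hω
    simp only [Set.mem_setOf_eq] at hω
    have hn1 : 1 ≤ τ x ω := by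
      by_contra h
      push_neg at h
      have h0 : τ x ω = 0 := by omega
      rw [h0, hS0] at hω
      linarith
    have hxn : x + α ≤ S (τ x ω) ω := by linarith
    have hlt : S (τ x ω - 1) ω < x := by
      by_contra h
      push_neg at h
      have hmem : τ x ω - 1 ∈ {n : ℕ | x ≤ S n ω} := h
      have hle := Nat.sInf_le hmem
      rw [← hτ x ω] at hle
      omega
    set m := τ x ω - 1 with hm
    have hnm : τ x ω = m + 1 := by omega
    have hxm : 0 < x - S m ω := by linarith
    set k := Nat.floor (x - S m ω) with hk
    have hk1 : (k:ℝ) ≤ x - S m ω := Nat.floor_le hxm.le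
    have hk2 : x - S m ω < k + 1 := Nat.lt_floor_add_one _
    have hc1 : x - k - 1 < S m ω := by linarith
    have hc2 : S m ω ≤ x - k := by linarith
    have hXm : α + k ≤ X m ω := by
      have hs := hSsucc m ω
      rw [← hnm] at hs
      linarith
    have hjne : x - (k:ℝ) - 1 < S m ω := hc1
    set j := sInf {i : ℕ | x - (k:ℝ) - 1 < S i ω} with hj
    have hjmem : x - (k:ℝ) - 1 < S j ω := Nat.sInf_mem (⟨m, hjne⟩ : {i : ℕ | x - (k:ℝ) - 1 < S i ω}.Nonempty)
    have hjle : j ≤ m := Nat.sInf_le hjne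
    have hjlt : ∀ i < j, S i ω ≤ x - (k:ℝ) - 1 := by
      intro i hi
      by_contra h
      push_neg at h
      have hmem' : i ∈ {i : ℕ | x - (k:ℝ) - 1 < S i ω} := h
      have := Nat.sInf_le hmem'
      omega
    refine Set.mem_iUnion.2 ⟨j, Set.mem_iUnion.2 ⟨m - j, Set.mem_iUnion.2 ⟨k, ?_, ?_, ?_⟩⟩⟩
    · exact ⟨hjmem, hjlt⟩
    · show (∑ i ∈ Finset.Ico j (j + (m - j)), X i ω) ≤ 1
      rw [show j + (m - j) = m from by omega]
      have hsum : ∑ i ∈ Finset.Ico j m, X i ω = S m ω - S j ω := by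
        rw [hS, hS, Finset.sum_Ico_eq_sub _ hjle]
      rw [hsum]
      linarith
    · show α + (k:ℝ) ≤ X (j + (m - j)) ω
      rw [show j + (m - j) = m from by omega]
      exact hXm
  -- per-term bound
  have hterm : ∀ (j d k : ℕ),
      ℙ (D j (x - k - 1) ∩
        {ω | (∑ i ∈ Finset.Ico j (j+d), X i ω) ≤ 1 ∧ α + k ≤ X (j+d) ω})
      ≤ ℙ (D j (x - k - 1)) *
        (ENNReal.ofReal (Real.exp lam0) * ψ ^ d *
          (Mgf * ENNReal.ofReal (Real.exp (-lam0 * (α + k))))) := by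
    intro jj d k
    set c : ℝ := x - (k:ℝ) - 1 with hc
    set B : Set Ω := {ω | (∑ i ∈ Finset.Ico jj (jj+d), X i ω) ≤ 1 ∧ α + k ≤ X (jj+d) ω} with hB
    set m : ℕ := jj + d with hmm
    -- Step 1 : bound ℙ B
    have hBsplit : ℙ B = ℙ {ω | (∑ i ∈ Finset.Ico jj (jj+d), X i ω) ≤ 1} *
        ℙ {ω | α + k ≤ X (jj+d) ω} := by
      have hind : IndepFun (fun ω => ∑ i ∈ Finset.Ico jj (jj+d), X i ω) (X (jj+d)) ℙ := by
        have h := hindep.indepFun_finsetSum_of_notMem hmeas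
          (s := Finset.Ico jj (jj+d)) (i := jj+d) (by simp)
        have heq : (∑ i ∈ Finset.Ico jj (jj+d), X i)
            = fun ω => ∑ i ∈ Finset.Ico jj (jj+d), X i ω := by
          ext ω; simp [Finset.sum_apply]
        rwa [heq] at h
      have hmul := hind.measure_inter_preimage_eq_mul
        (s := Set.Iic (1:ℝ)) (t := Set.Ici (α + k)) measurableSet_Iic measurableSet_Ici
      have hBeq : B = (fun ω => ∑ i ∈ Finset.Ico jj (jj+d), X i ω) ⁻¹' Set.Iic (1:ℝ)
          ∩ (X (jj+d)) ⁻¹' Set.Ici (α + k) := by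
        ext ω
        simp [hB, hmm, Set.mem_Iic, Set.mem_Ici]
      rw [hBeq, hmul]
      rfl
    have hBle : ℙ B ≤ ENNReal.ofReal (Real.exp lam0) * ψ ^ d *
        (Mgf * ENNReal.ofReal (Real.exp (-lam0 * (α + k)))) := by
      rw [hBsplit]
      exact mul_le_mul' (hblockP jj d) (htail (jj+d) (α + k))
    -- Step 2 : independence of D and B
    have hDB : ℙ (D jj c ∩ B) ≤ ℙ (D jj c) * ℙ B := by
      obtain _ | p := jj
      · by_cases hc0 : c < 0
        · have hD : D 0 c = Set.univ := by
            ext ω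
            simp only [hDdef, Set.mem_setOf_eq, Set.mem_univ, iff_true]
            exact ⟨by rw [hS0]; exact hc0, fun i hi => absurd hi (Nat.not_lt_zero i)⟩
          rw [hD, Set.univ_inter, measure_univ, one_mul]
        · have hD : D 0 c = ∅ := by
            ext ω
            simp only [hDdef, Set.mem_setOf_eq, Set.mem_empty_iff_false, iff_false, not_and]
            intro hlt
            rw [hS0] at hlt
            exact absurd hlt (not_lt.2 (le_of_not_gt hc0))
          rw [hD, Set.empty_inter, measure_empty]
          exact zero_le
      · -- jj = p + 1
        have hmmem : m ∈ Finset.Ico (p+1) (m+1) := by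
          simp only [Finset.mem_Ico, hmm]
          omega
        have hdisjf : Disjoint (Finset.range (p+1)) (Finset.Ico (p+1) (m+1)) := by
          rw [Finset.disjoint_left]
          intro a ha hb
          simp only [Finset.mem_range] at ha
          simp only [Finset.mem_Ico] at hb
          omega
        have hFG := hindep.indepFun_finset (Finset.range (p+1)) (Finset.Ico (p+1) (m+1))
          hdisjf hmeas
        set SA : Set ((Finset.range (p+1) : Finset ℕ) → ℝ) :=
          {v | c < ∑ i, v i ∧
            ∑ i ∈ Finset.univ.filter (fun i : (Finset.range (p+1) : Finset ℕ) => (i : ℕ) < p), v i ≤ c}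
          with hSAdef
        set SB : Set ((Finset.Ico (p+1) (m+1) : Finset ℕ) → ℝ) :=
          {w | ∑ i ∈ Finset.univ.filter
              (fun i : (Finset.Ico (p+1) (m+1) : Finset ℕ) => (i : ℕ) < m), w i ≤ 1 ∧
            α + k ≤ w ⟨m, hmmem⟩} with hSBdef
        have hSAm : MeasurableSet SA := by
          refine MeasurableSet.inter ?_ ?_
          · exact measurableSet_lt measurable_const
              (Finset.measurable_sum _ fun i _ => measurable_pi_apply i)
          · exact measurableSet_le
              (Finset.measurable_sum _ fun i _ => measurable_pi_apply i) measurable_const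
        have hSBm : MeasurableSet SB := by
          refine MeasurableSet.inter ?_ ?_
          · exact measurableSet_le
              (Finset.measurable_sum _ fun i _ => measurable_pi_apply i) measurable_const
          · exact measurableSet_le measurable_const (measurable_pi_apply _)
        -- pointwise sum identities
        have ha : ∀ ω, (∑ i : (Finset.range (p+1) : Finset ℕ), X (i:ℕ) ω) = S (p+1) ω := by
          intro ω
          rw [Finset.sum_coe_sort (Finset.range (p+1)) (fun i => X i ω), hS]
        have hbb : ∀ ω, (∑ i ∈ Finset.univ.filter
            (fun i : (Finset.range (p+1) : Finset ℕ) => (i : ℕ) < p), X (i:ℕ) ω) = S p ω := by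
          intro ω
          rw [Finset.sum_filter]
          rw [Finset.sum_coe_sort (Finset.range (p+1)) (fun i => if i < p then X i ω else 0)]
          rw [← Finset.sum_filter]
          have hfe : (Finset.range (p+1)).filter (fun a => a < p) = Finset.range p := by
            ext a
            simp only [Finset.mem_filter, Finset.mem_range]
            omega
          rw [hfe, hS]
        have hcc : ∀ ω, (∑ i ∈ Finset.univ.filter
            (fun i : (Finset.Ico (p+1) (m+1) : Finset ℕ) => (i : ℕ) < m), X (i:ℕ) ω)
            = ∑ i ∈ Finset.Ico (p+1) m, X i ω := by
          intro ω
          rw [Finset.sum_filter]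
          rw [Finset.sum_coe_sort (Finset.Ico (p+1) (m+1)) (fun i => if i < m then X i ω else 0)]
          rw [← Finset.sum_filter]
          congr 1
          ext a
          simp only [Finset.mem_filter, Finset.mem_Ico]
          omega
        have hApre : (fun ω (i : (Finset.range (p+1) : Finset ℕ)) => X (i:ℕ) ω) ⁻¹' SA
            = D (p+1) c := by
          ext ω
          simp only [Set.mem_preimage, hSAdef, Set.mem_setOf_eq, hDdef]
          rw [ha ω, hbb ω]
          constructor
          · rintro ⟨h1, h2⟩
            exact ⟨h1, fun i hi => le_trans (hSmono i p (by omega) ω) h2⟩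
          · rintro ⟨h1, h2⟩
            exact ⟨h1, h2 p (by omega)⟩
        have hBpre : (fun ω (i : (Finset.Ico (p+1) (m+1) : Finset ℕ)) => X (i:ℕ) ω) ⁻¹' SB
            = B := by
          ext ω
          simp only [Set.mem_preimage, hSBdef, Set.mem_setOf_eq, hB]
          rw [hcc ω]
        have hmul := hFG.measure_inter_preimage_eq_mul SA SB hSAm hSBm
        rw [hApre, hBpre] at hmul
        exact le_of_eq hmul
    calc ℙ (D jj c ∩ B) ≤ ℙ (D jj c) * ℙ B := hDB
      _ ≤ ℙ (D jj c) * (ENNReal.ofReal (Real.exp lam0) * ψ ^ d *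
          (Mgf * ENNReal.ofReal (Real.exp (-lam0 * (α + k))))) := mul_le_mul_right hBle _
  -- assemble
  set Eα : ENNReal := ENNReal.ofReal (Real.exp (-lam0 * α)) with hEα
  have hek : ∀ k : ℕ, ENNReal.ofReal (Real.exp (-lam0 * (α + k))) = Eα * r2 ^ k := by
    intro k
    have harith : -lam0 * (α + k) = -lam0 * α + k * -lam0 := by ring
    rw [harith, Real.exp_add, ENNReal.ofReal_mul (Real.exp_pos _).le, Real.exp_nat_mul,
      ENNReal.ofReal_pow (Real.exp_pos _).le]
  set CC : ENNReal := ENNReal.ofReal (Real.exp lam0) * Mgf * Eα with hCC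
  set Pjk : ℕ → ℕ → ENNReal := fun j k => ℙ (D j (x - (k:ℝ) - 1)) with hPjk
  have hUB : ℙ {ω | α ≤ S (τ x ω) ω - x} ≤
      ∑' (j : ℕ), ∑' (d : ℕ), ∑' (k : ℕ),
        ℙ (D j (x - (k:ℝ) - 1) ∩
          {ω | (∑ i ∈ Finset.Ico j (j+d), X i ω) ≤ 1 ∧ α + k ≤ X (j+d) ω}) := by
    refine le_trans (measure_mono hcover) ?_
    refine le_trans (measure_iUnion_le _) (ENNReal.tsum_le_tsum fun j => ?_)
    refine le_trans (measure_iUnion_le _) (ENNReal.tsum_le_tsum fun d => ?_)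
    exact measure_iUnion_le _
  have hUB2 : ℙ {ω | α ≤ S (τ x ω) ω - x} ≤
      ∑' (j : ℕ), ∑' (d : ℕ), ∑' (k : ℕ), ((CC * ψ ^ d) * (r2 ^ k * Pjk j k)) := by
    refine le_trans hUB ?_
    refine ENNReal.tsum_le_tsum fun j => ENNReal.tsum_le_tsum fun d =>
      ENNReal.tsum_le_tsum fun k => ?_
    refine le_trans (hterm j d k) (le_of_eq ?_)
    rw [hek k, hCC, hPjk]
    ring
  have hQsum : ∑' (j : ℕ), ∑' (k : ℕ), r2 ^ k * Pjk j k ≤ (1 - r2)⁻¹ := by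
    rw [ENNReal.tsum_comm]
    calc ∑' (k:ℕ), ∑' (j:ℕ), r2 ^ k * Pjk j k
        = ∑' (k:ℕ), r2 ^ k * ∑' (j:ℕ), Pjk j k := by
          refine tsum_congr fun k => ?_
          rw [ENNReal.tsum_mul_left]
      _ ≤ ∑' (k:ℕ), r2 ^ k * 1 := ENNReal.tsum_le_tsum fun k =>
          mul_le_mul_right (hDsum _) _
      _ = (1 - r2)⁻¹ := by simp [ENNReal.tsum_geometric]
  have hflat : ∑' (j : ℕ), ∑' (d : ℕ), ∑' (k : ℕ), ((CC * ψ ^ d) * (r2 ^ k * Pjk j k))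
      = (CC * (1-ψ)⁻¹) * ∑' (j:ℕ), ∑' (k:ℕ), r2 ^ k * Pjk j k := by
    calc ∑' (j : ℕ), ∑' (d : ℕ), ∑' (k : ℕ), ((CC * ψ ^ d) * (r2 ^ k * Pjk j k))
        = ∑' (j : ℕ), ∑' (d : ℕ), (CC * ψ ^ d) * ∑' (k:ℕ), (r2 ^ k * Pjk j k) := by
          refine tsum_congr fun j => tsum_congr fun d => ?_
          rw [ENNReal.tsum_mul_left]
      _ = ∑' (j : ℕ), ∑' (d : ℕ), (CC * (∑' (k:ℕ), r2 ^ k * Pjk j k)) * ψ ^ d := by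
          refine tsum_congr fun j => tsum_congr fun d => by ring
      _ = ∑' (j : ℕ), (CC * (∑' (k:ℕ), r2 ^ k * Pjk j k)) * ∑' (d:ℕ), ψ ^ d := by
          refine tsum_congr fun j => ?_
          rw [ENNReal.tsum_mul_left]
      _ = ∑' (j : ℕ), (CC * (1-ψ)⁻¹) * (∑' (k:ℕ), r2 ^ k * Pjk j k) := by
          refine tsum_congr fun j => ?_
          rw [ENNReal.tsum_geometric]
          ring
      _ = (CC * (1-ψ)⁻¹) * ∑' (j:ℕ), ∑' (k:ℕ), r2 ^ k * Pjk j k := ENNReal.tsum_mul_left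
  have hmain : ℙ {ω | α ≤ S (τ x ω) ω - x} ≤ K * Eα := by
    refine le_trans hUB2 ?_
    rw [hflat]
    calc (CC * (1-ψ)⁻¹) * ∑' (j:ℕ), ∑' (k:ℕ), r2 ^ k * Pjk j k
        ≤ (CC * (1-ψ)⁻¹) * (1 - r2)⁻¹ := mul_le_mul_right hQsum _
      _ = K * Eα := by rw [hCC, hKdef]; ring
  refine le_trans hmain ?_
  rw [ENNReal.ofReal_mul (by positivity), ← hEα]
  refine mul_le_mul_left ?_ _
  conv_lhs => rw [← ENNReal.ofReal_toReal hKfin]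
  exact ENNReal.ofReal_le_ofReal (by linarith)
end

section
/- Let λ₀ > 0 and let (X_j)_{j≥1} be i.i.d. nonnegative real random variables with E[X_1] > 0 and E[exp(λ₀ X_1)] < ∞. Let Λ(λ) = log E[exp(λ X_1)], S_n = X_1 + ... + X_n, and for x > 0 let τ_x = inf{n ≥ 0 : S_n ≥ x}. For 0 ≤ λ < λ₀ define M_n^λ = exp(λ S_n − Λ(λ) n). Then for every 0 ≤ λ < λ₀ and every x ≥ 0, the family of random variables {M_{n ∧ τ_x}^λ : n ∈ ℕ} is uniformly integrable. -/
open MeasureTheory ProbabilityTheory Filter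
open scoped ENNReal NNReal

set_option maxHeartbeats 1000000

lemma meas_comp_idx {Ω : Type*} [MeasurableSpace Ω] (Y : ℕ → Ω → ℝ)
    (hY : ∀ k, Measurable (Y k)) {m : Ω → ℕ} (hm : Measurable m) :
    Measurable (fun ω => Y (m ω) ω) := by
  intro B hB
  have h : (fun ω => Y (m ω) ω) ⁻¹' B = ⋃ k, (m ⁻¹' {k} ∩ Y k ⁻¹' B) := by
    ext ω
    simp only [Set.mem_preimage, Set.mem_iUnion, Set.mem_inter_iff, Set.mem_singleton_iff]
    exact ⟨fun h => ⟨m ω, rfl, h⟩, fun ⟨k, hk, h⟩ => hk ▸ h⟩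
  rw [h]
  exact MeasurableSet.iUnion fun k => (hm (measurableSet_singleton k)).inter (hY k hB)


/-- The stopped exponential martingale `M_{n ∧ τ_x}^λ = exp(λ S_{n ∧ τ_x} - Λ(λ) (n ∧ τ_x))`
associated with an i.i.d. nonnegative random walk with positive mean and finite exponential
moment is uniformly integrable, for every `0 ≤ λ < λ₀` and every `x ≥ 0`. -/
theorem stopped_exponential_martingale_uniformIntegrable
    {Ω : Type*} [MeasureSpace Ω] [IsProbabilityMeasure (ℙ : Measure Ω)]
    (X : ℕ → Ω → ℝ)
    (hmeas : ∀ j, Measurable (X j))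
    (hindep : iIndepFun X ℙ)
    (hident : ∀ j, IdentDistrib (X j) (X 0) ℙ ℙ)
    (hnonneg : ∀ j ω, 0 ≤ X j ω)
    (hmean : 0 < ∫ ω, X 0 ω ∂ℙ)
    (lam0 : ℝ) (hlam0 : 0 < lam0)
    (hexp : Integrable (fun ω => Real.exp (lam0 * X 0 ω)) ℙ)
    (Λ : ℝ → ℝ) (hΛ : ∀ l, Λ l = Real.log (∫ ω, Real.exp (l * X 0 ω) ∂ℙ))
    (S : ℕ → Ω → ℝ) (hS : ∀ n ω, S n ω = ∑ j ∈ Finset.range n, X j ω)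
    (τ : ℝ → Ω → ℕ) (hτ : ∀ x ω, τ x ω = sInf {n : ℕ | x ≤ S n ω}) :
    ∀ lam : ℝ, 0 ≤ lam → lam < lam0 → ∀ x ≥ (0:ℝ),
      UniformIntegrable
        (fun (n : ℕ) (ω : Ω) =>
          Real.exp (lam * S (min n (τ x ω)) ω - Λ lam * (min n (τ x ω))))
        1 ℙ := by
  intro lam hlam hlamlt x hx
  set F : ℕ → Ω → ℝ := fun n ω =>
    Real.exp (lam * S (min n (τ x ω)) ω - Λ lam * (min n (τ x ω))) with hF
  set c : ℝ := Real.exp (lam * x) with hc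
  set C : ℝ := ∫ ω, Real.exp (lam * X 0 ω) ∂ℙ with hC
  set ρ : ℝ := ∫ ω, Real.exp (-(X 0 ω)) ∂ℙ with hρ
  have hc1 : 1 ≤ c := Real.one_le_exp (mul_nonneg hlam hx)
  have hc0 : 0 ≤ c := le_trans zero_le_one hc1
  -- basic facts about S
  have hSmeas : ∀ k, Measurable (S k) := by
    intro k
    have : S k = fun ω => ∑ j ∈ Finset.range k, X j ω := funext (hS k)
    rw [this]
    exact Finset.measurable_sum _ (fun j _ => hmeas j)
  have hSnonneg : ∀ k ω, 0 ≤ S k ω := by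
    intro k ω; rw [hS]
    exact Finset.sum_nonneg fun j _ => hnonneg j ω
  have hS0 : ∀ ω, S 0 ω = 0 := by intro ω; rw [hS]; simp
  have hSsucc : ∀ k ω, S (k + 1) ω = S k ω + X k ω := by
    intro k ω; rw [hS, hS, Finset.sum_range_succ]
  -- characterization of τ
  have hτ1 : ∀ k ω, τ x ω = k + 1 ↔ (x ≤ S (k + 1) ω ∧ ∀ i ≤ k, S i ω < x) := by
    intro k ω
    rw [hτ x ω]
    constructor
    · intro h
      have hne : {n : ℕ | x ≤ S n ω}.Nonempty := by
        by_contra hne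
        rw [Set.not_nonempty_iff_eq_empty] at hne
        rw [hne, Nat.sInf_empty] at h
        exact (Nat.succ_ne_zero k) h.symm
      refine ⟨by have := Nat.sInf_mem hne; rwa [h] at this, fun i hi => ?_⟩
      have hlt : i < sInf {n : ℕ | x ≤ S n ω} := by rw [h]; omega
      exact not_le.mp (Nat.notMem_of_lt_sInf hlt)
    · rintro ⟨h1, h2⟩
      refine le_antisymm (Nat.sInf_le h1) ?_
      by_contra hcon
      push_neg at hcon
      have hmem := Nat.sInf_mem (⟨k + 1, h1⟩ : {n : ℕ | x ≤ S n ω}.Nonempty)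
      exact absurd hmem (not_le.mpr (h2 _ (Nat.lt_succ_iff.mp hcon)))
  have hτ0 : ∀ ω, τ x ω = 0 ↔ (x ≤ S 0 ω ∨ ∀ n, S n ω < x) := by
    intro ω
    rw [hτ x ω, Nat.sInf_eq_zero]
    constructor
    · rintro (h | h)
      · exact Or.inl h
      · refine Or.inr fun n => not_le.mp ?_
        intro hn
        exact absurd h (Set.nonempty_iff_ne_empty.mp ⟨n, hn⟩)
    · rintro (h | h)
      · exact Or.inl h
      · exact Or.inr (Set.eq_empty_iff_forall_notMem.mpr fun n hn => absurd hn (not_le.mpr (h n)))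
  have hτsets : ∀ j, MeasurableSet {ω | τ x ω = j} := by
    intro j
    cases j with
    | zero =>
      have : {ω | τ x ω = 0} = {ω | x ≤ S 0 ω} ∪ ⋂ n, {ω | S n ω < x} := by
        ext ω
        simp only [Set.mem_setOf_eq, hτ0 ω, Set.mem_union, Set.mem_iInter]
      rw [this]
      exact (measurableSet_le measurable_const (hSmeas 0)).union
        (MeasurableSet.iInter fun n => measurableSet_lt (hSmeas n) measurable_const)
    | succ k =>
      have : {ω | τ x ω = k + 1} =
          {ω | x ≤ S (k + 1) ω} ∩ ⋂ i, ⋂ (_ : i ≤ k), {ω | S i ω < x} := by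
        ext ω
        simp only [Set.mem_setOf_eq, hτ1 k ω, Set.mem_inter_iff, Set.mem_iInter]
      rw [this]
      exact (measurableSet_le measurable_const (hSmeas (k + 1))).inter
        (MeasurableSet.iInter fun i => MeasurableSet.iInter fun _ =>
          measurableSet_lt (hSmeas i) measurable_const)
  have hτmeas : Measurable (τ x) := by
    apply measurable_to_countable'
    intro j
    have : τ x ⁻¹' {j} = {ω | τ x ω = j} := by ext ω; simp
    rw [this]; exact hτsets j
  -- integrability of exponentials
  have hint0 : Integrable (fun ω => Real.exp (lam * X 0 ω)) ℙ := by
    refine hexp.mono' ((Real.measurable_exp.comp ((hmeas 0).const_mul lam)).aestronglyMeasurable) ?_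
    filter_upwards with ω
    rw [Real.norm_eq_abs, abs_of_pos (Real.exp_pos _)]
    exact Real.exp_le_exp.mpr (mul_le_mul_of_nonneg_right hlamlt.le (hnonneg 0 ω))
  have hid : ∀ k, IdentDistrib (fun ω => Real.exp (lam * X k ω))
      (fun ω => Real.exp (lam * X 0 ω)) ℙ ℙ :=
    fun k => (hident k).comp (Real.measurable_exp.comp (measurable_id.const_mul lam))
  have hintk : ∀ k, Integrable (fun ω => Real.exp (lam * X k ω)) ℙ :=
    fun k => ((hid k).integrable_iff).mpr hint0
  have hCk : ∀ k, ∫ ω, Real.exp (lam * X k ω) ∂ℙ = C := fun k => (hid k).integral_eq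
  have hC0 : 0 ≤ C := integral_nonneg fun ω => (Real.exp_pos _).le
  have hintnegS : ∀ k, Integrable (fun ω => Real.exp (-(S k ω))) ℙ := by
    intro k
    refine (integrable_const (1 : ℝ)).mono'
      ((Real.measurable_exp.comp (hSmeas k).neg).aestronglyMeasurable) ?_
    filter_upwards with ω
    rw [Real.norm_eq_abs, abs_of_pos (Real.exp_pos _)]
    calc Real.exp (-(S k ω)) ≤ Real.exp 0 :=
          Real.exp_le_exp.mpr (neg_nonpos.mpr (hSnonneg k ω))
      _ = 1 := Real.exp_zero
  have hintnegX : ∀ k, Integrable (fun ω => Real.exp (-(X k ω))) ℙ := by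
    intro k
    refine (integrable_const (1 : ℝ)).mono'
      ((Real.measurable_exp.comp (hmeas k).neg).aestronglyMeasurable) ?_
    filter_upwards with ω
    rw [Real.norm_eq_abs, abs_of_pos (Real.exp_pos _)]
    calc Real.exp (-(X k ω)) ≤ Real.exp 0 :=
          Real.exp_le_exp.mpr (neg_nonpos.mpr (hnonneg k ω))
      _ = 1 := Real.exp_zero
  have hXρ : ∀ k, ∫ ω, Real.exp (-(X k ω)) ∂ℙ = ρ :=
    fun k => ((hident k).comp (Real.measurable_exp.comp measurable_neg)).integral_eq
  -- independence of S k and X k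
  have hSX : ∀ k, IndepFun (S k) (X k) ℙ := by
    intro k
    have h := hindep.indepFun_finsetSum_of_notMem hmeas (Finset.notMem_range_self (n := k))
    have hfun : S k = ∑ j ∈ Finset.range k, X j := by
      ext ω; rw [hS]; simp [Finset.sum_apply]
    rw [hfun]; exact h
  -- ∫ exp(-S k) = ρ^k
  have hρk : ∀ k, ∫ ω, Real.exp (-(S k ω)) ∂ℙ = ρ ^ k := by
    intro k
    induction k with
    | zero =>
      simp only [hS0, neg_zero, Real.exp_zero, pow_zero]
      simp
    | succ k ih =>
      have hind : IndepFun (fun ω => Real.exp (-(S k ω))) (fun ω => Real.exp (-(X k ω))) ℙ :=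
        (hSX k).comp (Real.measurable_exp.comp measurable_neg)
          (Real.measurable_exp.comp measurable_neg)
      calc ∫ ω, Real.exp (-(S (k + 1) ω)) ∂ℙ
          = ∫ ω, Real.exp (-(S k ω)) * Real.exp (-(X k ω)) ∂ℙ := by
            congr 1; ext ω; rw [hSsucc, neg_add, Real.exp_add]
        _ = (∫ ω, Real.exp (-(S k ω)) ∂ℙ) * ∫ ω, Real.exp (-(X k ω)) ∂ℙ :=
            hind.integral_fun_mul_eq_mul_integral (hintnegS k).aestronglyMeasurable (hintnegX k).aestronglyMeasurable
        _ = ρ ^ k * ρ := by rw [ih, hXρ k]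
        _ = ρ ^ (k + 1) := (pow_succ ρ k).symm
  -- ρ < 1
  have hρ0 : 0 ≤ ρ := integral_nonneg fun ω => (Real.exp_pos _).le
  have hρ1 : ρ < 1 := by
    have hgint : Integrable (fun ω => 1 - Real.exp (-(X 0 ω))) ℙ :=
      (integrable_const 1).sub (hintnegX 0)
    have hgnn : ∀ ω, 0 ≤ 1 - Real.exp (-(X 0 ω)) := by
      intro ω
      have : Real.exp (-(X 0 ω)) ≤ 1 := by
        calc Real.exp (-(X 0 ω)) ≤ Real.exp 0 :=
              Real.exp_le_exp.mpr (neg_nonpos.mpr (hnonneg 0 ω))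
          _ = 1 := Real.exp_zero
      linarith
    have hpos : 0 < ∫ ω, (1 - Real.exp (-(X 0 ω))) ∂ℙ := by
      rw [integral_pos_iff_support_of_nonneg hgnn hgint]
      by_contra h
      push_neg at h
      have hz : ℙ (Function.support fun ω => 1 - Real.exp (-(X 0 ω))) = 0 :=
        le_antisymm (by simpa using h) (by simp)
      have hXz : X 0 =ᵐ[ℙ] 0 := by
        rw [Filter.EventuallyEq, ae_iff]
        refine measure_mono_null (fun ω hω => ?_) hz
        simp only [Set.mem_setOf_eq, Pi.zero_apply] at hω
        have hXpos : 0 < X 0 ω := lt_of_le_of_ne (hnonneg 0 ω) (Ne.symm hω)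
        have hlt : Real.exp (-(X 0 ω)) < 1 := by
          rw [← Real.exp_zero]; exact Real.exp_lt_exp.mpr (by linarith)
        simp only [Function.mem_support]
        exact ne_of_gt (by linarith : (0:ℝ) < 1 - Real.exp (-(X 0 ω)))
      have : ∫ ω, X 0 ω ∂ℙ = 0 := by
        rw [integral_congr_ae hXz]; simp
      linarith
    have hsub : ∫ ω, (1 - Real.exp (-(X 0 ω))) ∂ℙ = 1 - ρ := by
      rw [integral_sub (integrable_const 1) (hintnegX 0)]
      simp [hρ]
    linarith [hsub ▸ hpos]
  -- indicator of {· < x}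
  set φ : ℝ → ℝ := Set.indicator (Set.Iio x) (fun _ => (1:ℝ)) with hφ
  have hφmeas : Measurable φ := measurable_const.indicator measurableSet_Iio
  have hφint : ∀ k, Integrable (fun ω => φ (S k ω)) ℙ := by
    intro k
    refine (integrable_const (1 : ℝ)).mono'
      ((hφmeas.comp (hSmeas k)).aestronglyMeasurable) ?_
    filter_upwards with ω
    rw [Real.norm_eq_abs]
    by_cases h : S k ω ∈ Set.Iio x
    · rw [hφ, Set.indicator_of_mem h]; simp
    · rw [hφ, Set.indicator_of_notMem h]; simp
  have hpk : ∀ k, ∫ ω, φ (S k ω) ∂ℙ ≤ Real.exp x * ρ ^ k := by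
    intro k
    calc ∫ ω, φ (S k ω) ∂ℙ
        ≤ ∫ ω, Real.exp x * Real.exp (-(S k ω)) ∂ℙ := by
          refine integral_mono (hφint k) ((hintnegS k).const_mul _) (fun ω => ?_)
          by_cases h : S k ω ∈ Set.Iio x
          · rw [hφ, Set.indicator_of_mem h]
            rw [← Real.exp_add]
            refine Real.one_le_exp ?_
            have := h
            simp only [Set.mem_Iio] at this
            linarith
          · rw [hφ, Set.indicator_of_notMem h]
            positivity
      _ = Real.exp x * ρ ^ k := by rw [integral_const_mul, hρk k]
  -- ψ functions
  set ψ : ℕ → Ω → ℝ := fun k ω => c + c * Real.exp (lam * X k ω) with hψ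
  have hψint : ∀ k, Integrable (ψ k) ℙ :=
    fun k => (integrable_const c).add ((hintk k).const_mul c)
  have hψnonneg : ∀ k ω, 0 ≤ ψ k ω := by
    intro k ω
    have h1 : 0 ≤ c * Real.exp (lam * X k ω) := mul_nonneg hc0 (Real.exp_pos _).le
    simp only [hψ]
    linarith
  have hψval : ∀ k, ∫ ω, ψ k ω ∂ℙ = c + c * C := by
    intro k
    rw [hψ]
    rw [integral_add (integrable_const c) ((hintk k).const_mul c), integral_const,
      integral_const_mul, hCk k]
    simp
  -- independence product formula
  have hprod : ∀ k, ∫ ω, φ (S k ω) * ψ k ω ∂ℙ = (∫ ω, φ (S k ω) ∂ℙ) * (c + c * C) := by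
    intro k
    have hψmeasR : Measurable (fun t : ℝ => c + c * Real.exp (lam * t)) := by
      exact measurable_const.add ((Real.measurable_exp.comp (measurable_id.const_mul lam)).const_mul c)
    have hind : IndepFun (fun ω => φ (S k ω)) (ψ k) ℙ := (hSX k).comp hφmeas hψmeasR
    have := hind.integral_fun_mul_eq_mul_integral (hφint k).aestronglyMeasurable (hψint k).aestronglyMeasurable
    calc ∫ ω, φ (S k ω) * ψ k ω ∂ℙ
        = (∫ ω, φ (S k ω) ∂ℙ) * ∫ ω, ψ k ω ∂ℙ := this
      _ = (∫ ω, φ (S k ω) ∂ℙ) * (c + c * C) := by rw [hψval k]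
  -- B k, set integral bound
  set B : ℕ → Set Ω := fun k => S k ⁻¹' Set.Iio x with hB
  have hBmeas : ∀ k, MeasurableSet (B k) := fun k => (hSmeas k) measurableSet_Iio
  have hindB : ∀ k, (B k).indicator (ψ k) = fun ω => φ (S k ω) * ψ k ω := by
    intro k
    ext ω
    by_cases h : S k ω ∈ Set.Iio x
    · rw [Set.indicator_of_mem (by exact h) (ψ k), hφ, Set.indicator_of_mem h]
      simp
    · rw [Set.indicator_of_notMem (by exact h) (ψ k), hφ, Set.indicator_of_notMem h]
      simp
  have hsetk : ∀ k, ∫ ω in B k, ψ k ω ∂ℙ ≤ (c + c * C) * (Real.exp x * ρ ^ k) := by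
    intro k
    rw [← integral_indicator (hBmeas k), hindB k, hprod k]
    rw [mul_comm]
    exact mul_le_mul_of_nonneg_left (hpk k) (by nlinarith)
  have hlintk : ∀ k, ∫⁻ ω in B k, ENNReal.ofReal (ψ k ω) ∂ℙ
      ≤ ENNReal.ofReal ((c + c * C) * (Real.exp x * ρ ^ k)) := by
    intro k
    rw [← ofReal_integral_eq_lintegral_ofReal ((hψint k).integrableOn)
      (ae_of_all _ (fun ω => hψnonneg k ω))]
    exact ENNReal.ofReal_le_ofReal (hsetk k)
  -- the dominating function G
  set G : Ω → ℝ := fun ω => c + c * Real.exp (lam * X (τ x ω - 1) ω) with hG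
  have hτm1meas : Measurable (fun ω => τ x ω - 1) :=
    (measurable_from_nat (f := fun t : ℕ => t - 1)).comp hτmeas
  have hXτmeas : Measurable (fun ω => X (τ x ω - 1) ω) := meas_comp_idx X hmeas hτm1meas
  have hGmeas : Measurable G :=
    measurable_const.add ((Real.measurable_exp.comp (hXτmeas.const_mul lam)).const_mul c)
  have hGnonneg : ∀ ω, 0 ≤ G ω := by
    intro ω
    have h1 : 0 ≤ c * Real.exp (lam * X (τ x ω - 1) ω) := mul_nonneg hc0 (Real.exp_pos _).le
    simp only [hG]
    linarith
  have hG_ge_c : ∀ ω, c ≤ G ω := by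
    intro ω
    have h1 : 0 ≤ c * Real.exp (lam * X (τ x ω - 1) ω) := mul_nonneg hc0 (Real.exp_pos _).le
    simp only [hG]
    linarith
  -- Λ lam is nonnegative
  have hΛ0 : 0 ≤ Λ lam := by
    rw [hΛ]
    refine Real.log_nonneg ?_
    have h1 : ∫ (_ : Ω), (1:ℝ) ∂ℙ ≤ ∫ ω, Real.exp (lam * X 0 ω) ∂ℙ :=
      integral_mono (integrable_const 1) hint0
        (fun ω => Real.one_le_exp (mul_nonneg hlam (hnonneg 0 ω)))
    simpa using h1
  -- pointwise bound F n ≤ G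
  have hF_nonneg : ∀ n ω, 0 ≤ F n ω := fun n ω => (Real.exp_pos _).le
  have hFleG : ∀ n ω, F n ω ≤ G ω := by
    intro n ω
    set m := min n (τ x ω) with hm
    have h1 : F n ω ≤ Real.exp (lam * S m ω) := by
      refine Real.exp_le_exp.mpr ?_
      have : 0 ≤ Λ lam * (m : ℝ) := mul_nonneg hΛ0 (Nat.cast_nonneg m)
      show lam * S m ω - Λ lam * (m : ℝ) ≤ lam * S m ω
      linarith
    have hmle : m ≤ τ x ω := min_le_right _ _
    rcases lt_or_eq_of_le hmle with hlt | heq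
    · -- m < τ x ω : S m ω < x
      have hSm : S m ω < x := by
        by_contra hcon
        push_neg at hcon
        have : τ x ω ≤ m := by
          rw [hτ x ω]
          exact Nat.sInf_le hcon
        omega
      calc F n ω ≤ Real.exp (lam * S m ω) := h1
        _ ≤ c := Real.exp_le_exp.mpr (mul_le_mul_of_nonneg_left hSm.le hlam)
        _ ≤ G ω := hG_ge_c ω
    · -- m = τ x ω
      cases hτc : τ x ω with
      | zero =>
        have hm0 : m = 0 := by omega
        calc F n ω ≤ Real.exp (lam * S m ω) := h1
          _ = 1 := by rw [hm0, hS0 ω, mul_zero, Real.exp_zero]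
          _ ≤ c := hc1
          _ ≤ G ω := hG_ge_c ω
      | succ k =>
        obtain ⟨hxk1, hik⟩ := (hτ1 k ω).mp hτc
        have hSk : S k ω < x := hik k le_rfl
        have hSk1 : S (k + 1) ω ≤ x + X k ω := by
          rw [hSsucc k ω]; linarith
        have hmk : m = k + 1 := by omega
        calc F n ω ≤ Real.exp (lam * S m ω) := h1
          _ ≤ Real.exp (lam * x + lam * X k ω) := by
              refine Real.exp_le_exp.mpr ?_
              rw [hmk]
              calc lam * S (k+1) ω ≤ lam * (x + X k ω) :=
                    mul_le_mul_of_nonneg_left hSk1 hlam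
                _ = lam * x + lam * X k ω := by ring
          _ = c * Real.exp (lam * X k ω) := by rw [Real.exp_add]
          _ ≤ G ω := by
              have hτm1 : τ x ω - 1 = k := by omega
              simp only [hG, hτm1]
              linarith
  -- partition by value of τ
  set T : ℕ → Set Ω := fun j => {ω | τ x ω = j} with hT
  have hTmeas : ∀ j, MeasurableSet (T j) := hτsets
  have hTdisj : Pairwise (Function.onFun Disjoint T) := by
    intro i j hij
    rw [Function.onFun, Set.disjoint_left]
    intro ω hi hj
    simp only [hT, Set.mem_setOf_eq] at hi hj
    exact hij (hi.symm.trans hj)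
  have hTunion : ⋃ j, T j = Set.univ := by
    ext ω
    simp only [Set.mem_iUnion, Set.mem_univ, iff_true, hT, Set.mem_setOf_eq]
    exact ⟨τ x ω, rfl⟩
  have hTsubB : ∀ k, T (k + 1) ⊆ B k := by
    intro k ω hω
    simp only [hT, Set.mem_setOf_eq] at hω
    obtain ⟨_, hik⟩ := (hτ1 k ω).mp hω
    exact hik k le_rfl
  have hGT : ∀ j ω, ω ∈ T j → G ω = ψ (j - 1) ω := by
    intro j ω hω
    simp only [hT, Set.mem_setOf_eq] at hω
    simp only [hG, hψ, hω]
  -- G is integrable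
  have hGint : Integrable G ℙ := by
    refine ⟨hGmeas.aestronglyMeasurable, ?_⟩
    rw [hasFiniteIntegral_iff_ofReal (ae_of_all _ hGnonneg)]
    have hcong : ∀ j, ∫⁻ ω in T j, ENNReal.ofReal (G ω) ∂ℙ
        = ∫⁻ ω in T j, ENNReal.ofReal (ψ (j - 1) ω) ∂ℙ := fun j =>
      setLIntegral_congr_fun (hTmeas j) (fun ω hω => by simp only [hGT j ω hω])
    have hbound0 : ∫⁻ ω in T 0, ENNReal.ofReal (G ω) ∂ℙ ≤ ENNReal.ofReal (c + c * C) := by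
      rw [hcong 0]
      calc ∫⁻ ω in T 0, ENNReal.ofReal (ψ (0 - 1) ω) ∂ℙ
          ≤ ∫⁻ ω, ENNReal.ofReal (ψ 0 ω) ∂ℙ := setLIntegral_le_lintegral _ _
        _ = ENNReal.ofReal (∫ ω, ψ 0 ω ∂ℙ) :=
            (ofReal_integral_eq_lintegral_ofReal (hψint 0) (ae_of_all _ (hψnonneg 0))).symm
        _ = ENNReal.ofReal (c + c * C) := by rw [hψval 0]
    have hboundS : ∀ k, ∫⁻ ω in T (k + 1), ENNReal.ofReal (G ω) ∂ℙ
        ≤ ENNReal.ofReal ((c + c * C) * (Real.exp x * ρ ^ k)) := by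
      intro k
      rw [hcong (k + 1)]
      have hk1 : (k + 1) - 1 = k := by omega
      rw [hk1]
      calc ∫⁻ ω in T (k + 1), ENNReal.ofReal (ψ k ω) ∂ℙ
          ≤ ∫⁻ ω in B k, ENNReal.ofReal (ψ k ω) ∂ℙ := lintegral_mono_set (hTsubB k)
        _ ≤ ENNReal.ofReal ((c + c * C) * (Real.exp x * ρ ^ k)) := hlintk k
    calc ∫⁻ ω, ENNReal.ofReal (G ω) ∂ℙ
        = ∫⁻ ω in ⋃ j, T j, ENNReal.ofReal (G ω) ∂ℙ := by rw [hTunion, Measure.restrict_univ]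
      _ = ∑' j, ∫⁻ ω in T j, ENNReal.ofReal (G ω) ∂ℙ := lintegral_iUnion hTmeas hTdisj _
      _ = (∫⁻ ω in T 0, ENNReal.ofReal (G ω) ∂ℙ)
            + ∑' k, ∫⁻ ω in T (k + 1), ENNReal.ofReal (G ω) ∂ℙ :=
          tsum_eq_zero_add' ENNReal.summable
      _ ≤ ENNReal.ofReal (c + c * C)
            + ∑' k, ENNReal.ofReal ((c + c * C) * (Real.exp x * ρ ^ k)) :=
          add_le_add hbound0 (ENNReal.tsum_le_tsum hboundS)
      _ < ⊤ := by
          have h1 : ∀ k : ℕ, ENNReal.ofReal ((c + c * C) * (Real.exp x * ρ ^ k))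
              = ENNReal.ofReal ((c + c * C) * Real.exp x) * (ENNReal.ofReal ρ) ^ k := by
            intro k
            rw [show (c + c * C) * (Real.exp x * ρ ^ k) = ((c + c * C) * Real.exp x) * ρ ^ k
              by ring]
            rw [ENNReal.ofReal_mul (by positivity), ENNReal.ofReal_pow hρ0]
          simp only [h1]
          rw [ENNReal.tsum_mul_left, ENNReal.tsum_geometric]
          have hρlt : ENNReal.ofReal ρ < 1 := ENNReal.ofReal_lt_one.mpr hρ1
          have hsubpos : (0 : ℝ≥0∞) < 1 - ENNReal.ofReal ρ := tsub_pos_of_lt hρlt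
          have hinv : (1 - ENNReal.ofReal ρ)⁻¹ < ⊤ := ENNReal.inv_lt_top.mpr hsubpos
          refine ENNReal.add_lt_top.mpr ⟨ENNReal.ofReal_lt_top, ?_⟩
          exact ENNReal.mul_lt_top ENNReal.ofReal_lt_top hinv
  -- measurability of F n
  have hFmeas : ∀ n, Measurable (F n) := by
    intro n
    have hminmeas : Measurable (fun ω => min n (τ x ω)) :=
      (measurable_from_nat (f := fun t => min n t)).comp hτmeas
    have hScomp : Measurable (fun ω => S (min n (τ x ω)) ω) := meas_comp_idx S hSmeas hminmeas
    have hcast : Measurable (fun ω => ((min n (τ x ω) : ℕ) : ℝ)) :=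
      (measurable_from_nat (f := fun t : ℕ => (t : ℝ))).comp hminmeas
    exact Real.measurable_exp.comp ((hScomp.const_mul lam).sub (hcast.const_mul (Λ lam)))
  -- comparison of norms
  have hnormle : ∀ n ω, ‖F n ω‖ ≤ ‖G ω‖ := by
    intro n ω
    rw [Real.norm_eq_abs, Real.norm_eq_abs, abs_of_nonneg (hF_nonneg n ω),
      abs_of_nonneg (hGnonneg ω)]
    exact hFleG n ω
  -- final assembly
  refine ⟨fun n => (hFmeas n).aestronglyMeasurable, ?_, ?_⟩
  · intro ε hε
    obtain ⟨δ, hδpos, hδ⟩ :=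
      (memLp_one_iff_integrable.mpr hGint).eLpNorm_indicator_le le_rfl ENNReal.one_ne_top hε
    refine ⟨δ, hδpos, fun n s hs hμs => ?_⟩
    refine le_trans (eLpNorm_mono fun ω => ?_) (hδ s hs hμs)
    by_cases hωs : ω ∈ s
    · rw [Set.indicator_of_mem hωs, Set.indicator_of_mem hωs]
      exact hnormle n ω
    · rw [Set.indicator_of_notMem hωs, Set.indicator_of_notMem hωs]
  · have hGlt : eLpNorm G 1 ℙ < ⊤ := (memLp_one_iff_integrable.mpr hGint).2
    refine ⟨(eLpNorm G 1 ℙ).toNNReal, fun n => ?_⟩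
    calc eLpNorm (F n) 1 ℙ ≤ eLpNorm G 1 ℙ := eLpNorm_mono (hnormle n)
      _ = ((eLpNorm G 1 ℙ).toNNReal : ℝ≥0∞) := (ENNReal.coe_toNNReal hGlt.ne).symm
end

section
/- Let X be a real random variable whose law has a density with respect to Lebesgue measure that is positive on (0, ∞) and vanishes on (−∞, 0). Then for every θ > 0, the supremum over t ∈ [0, θ] of the total variation distance between the law of X and the law of t + X is strictly less than 1. -/
open MeasureTheory ProbabilityTheory Filter
open scoped ENNReal

theorem aux_abs_min (a b c : ℝ) : |min a b - min a c| ≤ |b - c| := by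
  rw [abs_sub_le_iff]
  constructor <;> simp only [min_def] <;> split_ifs <;>
    cases' abs_cases (b - c) with h h <;> cases' abs_cases (c - b) with h' h' <;> linarith

/-- If `X` has a Lebesgue density which is positive on `(0,∞)` and vanishes on `(-∞,0)`,
then the supremum over `t ∈ [0, θ]` of the total variation distance between the laws of
`X` and of `t + X` is strictly less than `1`. -/
theorem total_variation_translate_lt_one
    {Ω : Type*} [MeasureSpace Ω] [IsProbabilityMeasure (ℙ : Measure Ω)]
    (X : Ω → ℝ) (hX : Measurable X)
    (f : ℝ → ℝ≥0∞) (hf : Measurable f)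
    (hdens : Measure.map X ℙ = MeasureTheory.volume.withDensity f)
    (hfpos : ∀ x : ℝ, 0 < x → 0 < f x)
    (hfneg : ∀ x : ℝ, x < 0 → f x = 0)
    (θ : ℝ) (hθ : 0 < θ) :
    ∃ q : ℝ, q < 1 ∧ ∀ t : ℝ, 0 ≤ t → t ≤ θ → ∀ A : Set ℝ, MeasurableSet A →
      |(ℙ (X ⁻¹' A)).toReal - (ℙ ((fun ω => t + X ω) ⁻¹' A)).toReal| ≤ q := by
  -- basic facts about the density
  have hprob : IsProbabilityMeasure (Measure.map X ℙ) :=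
    Measure.isProbabilityMeasure_map hX.aemeasurable
  have hint : ∫⁻ x, f x = 1 := by
    have h := measure_univ (μ := Measure.map X ℙ)
    rwa [hdens, withDensity_apply _ MeasurableSet.univ, setLIntegral_univ] at h
  have hfin : ∀ᵐ x : ℝ, f x < ∞ := ae_lt_top hf (by rw [hint]; exact ENNReal.one_ne_top)
  set fr : ℝ → ℝ := fun x => (f x).toReal with hfrdef
  have hfr_int : Integrable fr (volume : Measure ℝ) :=
    integrable_toReal_of_lintegral_ne_top hf.aemeasurable (by rw [hint]; exact ENNReal.one_ne_top)
  -- null sets where `f` is infinite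
  have hNmeas : MeasurableSet {x : ℝ | f x = ∞} := hf (measurableSet_singleton ∞)
  have hN0 : volume {x : ℝ | f x = ∞} = 0 := by
    have := hfin
    rw [MeasureTheory.ae_iff] at this
    simpa [lt_top_iff_ne_top] using this
  have hN0t : ∀ t : ℝ, volume {x : ℝ | f (x - t) = ∞} = 0 := by
    intro t
    have : {x : ℝ | f (x - t) = ∞} = (fun x => x - t) ⁻¹' {x : ℝ | f x = ∞} := rfl
    rw [this, (measurePreserving_sub_right (volume : Measure ℝ) t).measure_preimage
      hNmeas.nullMeasurableSet]
    exact hN0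
  have hfint : ∀ t : ℝ, ∫⁻ x, f (x - t) = 1 := fun t => by
    rw [(measurePreserving_sub_right (volume : Measure ℝ) t).lintegral_comp hf, hint]
  -- the translated densities as a continuous family in L¹
  have hmem : MemLp fr 1 (volume : Measure ℝ) := memLp_one_iff_integrable.mpr hfr_int
  set L : Lp ℝ 1 (volume : Measure ℝ) := hmem.toLp fr with hL
  set Cm : C(ℝ × ℝ, ℝ) := ⟨fun p => p.2 - p.1, by continuity⟩ with hCm
  set c : ℝ → C(ℝ, ℝ) := fun t => (ContinuousMap.curry Cm) t with hc'
  have hc : Continuous c := (ContinuousMap.curry Cm).continuous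
  have hgm : ∀ t : ℝ, MeasurePreserving (c t) volume volume := fun t => by
    exact measurePreserving_sub_right (volume : Measure ℝ) t
  set T : ℝ → Lp ℝ 1 (volume : Measure ℝ) := fun t => Lp.compMeasurePreserving (c t) (hgm t) L
    with hT'
  have hT : Continuous T :=
    Continuous.compMeasurePreservingLp continuous_const hc hgm ENNReal.one_ne_top
  have hTfr : ∀ t : ℝ, (T t : ℝ → ℝ) =ᵐ[volume] fun x => fr (x - t) := by
    intro t
    have h1 : (T t : ℝ → ℝ) =ᵐ[volume] (L : ℝ → ℝ) ∘ (c t) :=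
      Lp.coeFn_compMeasurePreserving L (hgm t)
    have h2 : (L : ℝ → ℝ) ∘ (c t) =ᵐ[volume] fr ∘ (c t) := by
      apply ae_eq_comp (hgm t).aemeasurable
      rw [(hgm t).map_eq]
      exact hmem.coeFn_toLp
    refine (h1.trans h2).trans ?_
    filter_upwards with x
    simp [hc', hCm]
  -- the overlap functional
  set Φ : Lp ℝ 1 (volume : Measure ℝ) → ℝ := fun h => ∫ x, min (fr x) (h x) with hΦ'
  have hΦ : LipschitzWith 1 Φ := by
    apply LipschitzWith.of_dist_le_mul
    intro h₁ h₂
    rw [NNReal.coe_one, one_mul]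
    have hi₁ : Integrable (fun x => min (fr x) (h₁ x)) volume :=
      hfr_int.inf (L1.integrable_coeFn h₁)
    have hi₂ : Integrable (fun x => min (fr x) (h₂ x)) volume :=
      hfr_int.inf (L1.integrable_coeFn h₂)
    have hisub : Integrable (fun x => |h₁ x - h₂ x|) volume :=
      ((L1.integrable_coeFn h₁).sub (L1.integrable_coeFn h₂)).abs
    rw [Real.dist_eq, ← integral_sub hi₁ hi₂]
    calc |∫ x, (min (fr x) (h₁ x) - min (fr x) (h₂ x))|
        ≤ ∫ x, |min (fr x) (h₁ x) - min (fr x) (h₂ x)| := by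
          simpa using norm_integral_le_integral_norm
            (fun x => min (fr x) (h₁ x) - min (fr x) (h₂ x))
      _ ≤ ∫ x, |h₁ x - h₂ x| := by
          apply integral_mono (hi₁.sub hi₂).abs hisub
          intro x; exact aux_abs_min (fr x) (h₁ x) (h₂ x)
      _ = dist h₁ h₂ := by
          rw [dist_eq_norm, L1.norm_eq_integral_norm]
          apply integral_congr_ae
          filter_upwards [Lp.coeFn_sub h₁ h₂] with x hx
          rw [Real.norm_eq_abs, hx, Pi.sub_apply]
  set G : ℝ → ℝ := fun t => Φ (T t) with hG'
  have hGcont : Continuous G := hΦ.continuous.comp hT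
  have hGeq : ∀ t : ℝ, G t = ∫ x, min (fr x) (fr (x - t)) := by
    intro t
    apply integral_congr_ae
    filter_upwards [hTfr t] with x hx
    rw [hx]
  -- each translated density integrates against the minimum
  have hint_m : ∀ t : ℝ, Integrable (fun x => min (fr x) (fr (x - t))) volume := by
    intro t
    refine hfr_int.inf ?_
    have := ((hgm t).integrable_comp_emb ?emb).2 hfr_int
    · exact this
    · case emb =>
        exact (MeasurableEquiv.subRight t).measurableEmbedding
  -- positivity of the overlap on [0, θ]
  have hGpos : ∀ t ∈ Set.Icc (0:ℝ) θ, 0 < G t := by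
    rintro t ⟨ht0, htθ⟩
    rw [hGeq t]
    rw [integral_pos_iff_support_of_nonneg
      (fun x => le_min ENNReal.toReal_nonneg ENNReal.toReal_nonneg) (hint_m t)]
    have hsub : Set.Ioi θ \ ({x : ℝ | f x = ∞} ∪ {x : ℝ | f (x - t) = ∞}) ⊆
        Function.support (fun x => min (fr x) (fr (x - t))) := by
      rintro x ⟨hx, hx2⟩
      simp only [Set.mem_setOf_eq, Set.mem_union, not_or] at hx2
      have hx0 : (0:ℝ) < x := lt_trans hθ hx
      have hxt : (0:ℝ) < x - t := by
        have : t < x := lt_of_le_of_lt htθ hx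
        linarith
      have h1 : 0 < fr x := ENNReal.toReal_pos (hfpos x hx0).ne' hx2.1
      have h2 : 0 < fr (x - t) := ENNReal.toReal_pos (hfpos _ hxt).ne' hx2.2
      simp only [Function.mem_support]
      exact ne_of_gt (lt_min h1 h2)
    calc (0:ℝ≥0∞) < volume (Set.Ioi θ \ ({x : ℝ | f x = ∞} ∪ {x : ℝ | f (x - t) = ∞})) := by
          rw [measure_diff_null (by rw [measure_union_null_iff]; exact ⟨hN0, hN0t t⟩)]
          simp [Real.volume_Ioi]
      _ ≤ volume (Function.support (fun x => min (fr x) (fr (x - t)))) := measure_mono hsub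
  -- minimum of the overlap on the compact interval
  obtain ⟨t₀, ht₀mem, ht₀min⟩ :=
    isCompact_Icc.exists_isMinOn (Set.nonempty_Icc.mpr (le_of_lt hθ)) hGcont.continuousOn
  set ε : ℝ := G t₀ with hε'
  have hεpos : 0 < ε := hGpos t₀ ht₀mem
  refine ⟨1 - ε, by linarith, ?_⟩
  intro t ht0 htθ A hA
  have htmem : t ∈ Set.Icc (0:ℝ) θ := ⟨ht0, htθ⟩
  -- the minimum of the two densities, in ℝ≥0∞
  set m : ℝ → ℝ≥0∞ := fun x => min (f x) (f (x - t)) with hm'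
  have hm_meas : Measurable m := hf.min (hf.comp (measurable_id.sub_const t))
  have hm_le : ∀ x, m x ≤ f x := fun x => min_le_left _ _
  have hm_le' : ∀ x, m x ≤ f (x - t) := fun x => min_le_right _ _
  have hm_int_le : ∫⁻ x, m x ≤ 1 := by
    rw [← hint]; exact lintegral_mono hm_le
  have hm_ne_top : ∫⁻ x, m x ≠ ∞ := ne_top_of_le_ne_top ENNReal.one_ne_top hm_int_le
  -- the overlap equals the lintegral of m
  have hm_toReal : (∫⁻ x, m x).toReal = G t := by
    rw [hGeq t, ← integral_toReal hm_meas.aemeasurable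
      (hfin.mono fun x hx => lt_of_le_of_lt (hm_le x) hx)]
    apply integral_congr_ae
    have hfin2 : ∀ᵐ x : ℝ, f (x - t) ≠ ∞ := by
      rw [MeasureTheory.ae_iff]
      simpa using hN0t t
    filter_upwards [hfin.mono fun x hx => hx.ne, hfin2] with x h1 h2
    rw [hm', ENNReal.toReal_min h1 h2]
  have hεle : ENNReal.ofReal ε ≤ ∫⁻ x, m x := by
    rw [← ENNReal.ofReal_toReal hm_ne_top]
    apply ENNReal.ofReal_le_ofReal
    rw [hm_toReal]
    exact ht₀min htmem
  -- identify the two probabilities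
  set μ : Measure ℝ := Measure.map X ℙ with hμ'
  have hP1 : ℙ (X ⁻¹' A) = μ A := (Measure.map_apply hX hA).symm
  set B : Set ℝ := (fun x => t + x) ⁻¹' A with hB'
  have hBmeas : MeasurableSet B := (measurable_const_add t) hA
  have hP2 : ℙ ((fun ω => t + X ω) ⁻¹' A) = μ B := by
    have hcomp : (fun ω => t + X ω) = (fun x => t + x) ∘ X := rfl
    rw [hcomp, Set.preimage_comp]
    exact (Measure.map_apply hX hBmeas).symm
  -- express the two probabilities as set lintegrals
  have hμA : μ A = ∫⁻ x in A, f x := by rw [hdens, withDensity_apply _ hA]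
  have hμB : μ B = ∫⁻ x in A, f (x - t) := by
    rw [hdens, withDensity_apply _ hBmeas]
    rw [← lintegral_indicator hBmeas f, ← lintegral_indicator hA _]
    rw [← (measurePreserving_sub_right (volume : Measure ℝ) t).lintegral_comp
      (hf.indicator hBmeas)]
    congr 1
    funext x
    by_cases hx : x ∈ A
    · have : x - t ∈ B := by simp [hB', Set.mem_preimage]; simpa using hx
      simp [Set.indicator_of_mem hx, Set.indicator_of_mem this]
    · have : x - t ∉ B := by simp [hB', Set.mem_preimage]; simpa using hx
      simp [Set.indicator_of_notMem hx, Set.indicator_of_notMem this]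
  -- key two-sided estimate
  have hsplit : ∀ (g : ℝ → ℝ≥0∞), (∀ x, m x ≤ g x) → (∫⁻ x, g x = 1) →
      ∫⁻ x in A, g x ≤ (∫⁻ x in A, m x) + (1 - ∫⁻ x, m x) := by
    intro g hle hg1
    have : ∫⁻ x in A, g x = (∫⁻ x in A, m x) + ∫⁻ x in A, (g x - m x) := by
      rw [← lintegral_add_left hm_meas]
      apply lintegral_congr
      intro x
      rw [add_comm, tsub_add_cancel_of_le (hle x)]
    rw [this]
    gcongr
    calc ∫⁻ x in A, (g x - m x) ≤ ∫⁻ x, (g x - m x) :=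
          setLIntegral_le_lintegral _ _
      _ = 1 - ∫⁻ x, m x := by
          rw [lintegral_sub hm_meas hm_ne_top (Filter.Eventually.of_forall hle), hg1]
  have key1 : μ A ≤ μ B + (1 - ∫⁻ x, m x) := by
    rw [hμA, hμB]
    calc ∫⁻ x in A, f x ≤ (∫⁻ x in A, m x) + (1 - ∫⁻ x, m x) := hsplit f hm_le hint
      _ ≤ (∫⁻ x in A, f (x - t)) + (1 - ∫⁻ x, m x) := by
          gcongr with x
          exact hm_le' x
  have key2 : μ B ≤ μ A + (1 - ∫⁻ x, m x) := by
    rw [hμA, hμB]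
    calc ∫⁻ x in A, f (x - t) ≤ (∫⁻ x in A, m x) + (1 - ∫⁻ x, m x) :=
          hsplit (fun x => f (x - t)) hm_le' (hfint t)
      _ ≤ (∫⁻ x in A, f x) + (1 - ∫⁻ x, m x) := by
          gcongr with x
          exact hm_le x
  -- pass to real numbers
  have hμA1 : μ A ≤ 1 := prob_le_one
  have hμB1 : μ B ≤ 1 := prob_le_one
  have hc1 : (1 : ℝ≥0∞) - ∫⁻ x, m x ≤ ENNReal.ofReal (1 - ε) := by
    rw [← ENNReal.ofReal_one]
    calc (ENNReal.ofReal 1) - ∫⁻ x, m x ≤ ENNReal.ofReal 1 - ENNReal.ofReal ε :=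
          tsub_le_tsub_left hεle _
      _ ≤ ENNReal.ofReal (1 - ε) := by
          rw [← ENNReal.ofReal_sub _ (le_of_lt hεpos)]
  have hε1 : ε ≤ 1 := by
    refine le_trans (ht₀min htmem) ?_
    rw [← hm_toReal]
    simpa using ENNReal.toReal_mono ENNReal.one_ne_top hm_int_le
  have habs : ∀ a b : ℝ≥0∞, a ≤ 1 → b ≤ 1 → a ≤ b + ENNReal.ofReal (1 - ε) →
      a.toReal - b.toReal ≤ 1 - ε := by
    intro a b ha hb hab
    have ha' : a ≠ ∞ := ne_top_of_le_ne_top ENNReal.one_ne_top ha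
    have hb' : b ≠ ∞ := ne_top_of_le_ne_top ENNReal.one_ne_top hb
    have := ENNReal.toReal_mono (by
      exact ENNReal.add_ne_top.mpr ⟨hb', ENNReal.ofReal_ne_top⟩) hab
    rw [ENNReal.toReal_add hb' ENNReal.ofReal_ne_top] at this
    have h1ε : (0:ℝ) ≤ 1 - ε := by linarith
    rw [ENNReal.toReal_ofReal h1ε] at this
    linarith
  rw [hP1, hP2, abs_sub_le_iff]
  constructor
  · exact habs _ _ hμA1 hμB1 (key1.trans (by gcongr))
  · exact habs _ _ hμB1 hμA1 (key2.trans (by gcongr))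
end

section
/- Fix constants C > 0, α > 0, and L ∈ ℝ. Suppose F, F₁, F₂ are real-valued functions on (0, ∞) such that: (i) F₁ is nondecreasing on (0, ∞); (ii) |F₂(x + δ) − F₂(x)| ≤ C·max(δ^α, e^{−α x}) for all x > 0 and δ > 0; (iii) F = F₁ + F₂; and (iv) for every δ > 0, F(nδ) → L as n → ∞ through the positive integers. Then F(x) → L as x → ∞. -/
open Filter

/-- If `F = F₁ + F₂` on `(0,∞)` where `F₁` is nondecreasing, `F₂` has the modulus of
continuity bound `|F₂(x+δ) - F₂(x)| ≤ C max(δ^α, e^{-αx})`, and `F(nδ) → L` as `n → ∞`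
for every `δ > 0`, then `F(x) → L` as `x → ∞`. -/
theorem limit_along_arithmetic_progressions
    (C α L : ℝ) (hC : 0 < C) (hα : 0 < α)
    (F F₁ F₂ : ℝ → ℝ)
    (h₁ : ∀ x y : ℝ, 0 < x → x ≤ y → F₁ x ≤ F₁ y)
    (h₂ : ∀ x δ : ℝ, 0 < x → 0 < δ →
      |F₂ (x + δ) - F₂ x| ≤ C * max (δ ^ α) (Real.exp (-α * x)))
    (h₃ : ∀ x : ℝ, 0 < x → F x = F₁ x + F₂ x)
    (h₄ : ∀ δ : ℝ, 0 < δ →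
      Tendsto (fun n : ℕ => F (n * δ)) atTop (nhds L)) :
    Tendsto F atTop (nhds L) := by
  rw [Metric.tendsto_atTop]
  intro ε hε
  set δ := min 1 ((ε / (8 * C)) ^ (α⁻¹)) with hδdef
  have hq : 0 < ε / (8 * C) := by positivity
  have hδ : 0 < δ := lt_min one_pos (Real.rpow_pos_of_pos hq _)
  have hδα : δ ^ α ≤ ε / (8 * C) := by
    calc δ ^ α ≤ ((ε / (8 * C)) ^ (α⁻¹)) ^ α :=
          Real.rpow_le_rpow hδ.le (min_le_right _ _) hα.le
      _ = ε / (8 * C) := by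
          rw [← Real.rpow_mul hq.le, inv_mul_cancel₀ hα.ne', Real.rpow_one]
  have hCδ : C * δ ^ α ≤ ε / 8 := by
    have h := mul_le_mul_of_nonneg_left hδα hC.le
    have : C * (ε / (8 * C)) = ε / 8 := by field_simp
    linarith
  obtain ⟨N₀, hN₀⟩ := (Metric.tendsto_atTop.mp (h₄ δ hδ)) (ε / 4) (by positivity)
  have hexp : Tendsto (fun n : ℕ => Real.exp (-α * ((n : ℝ) * δ))) atTop (nhds 0) := by
    apply Real.tendsto_exp_atBot.comp
    have h1 : Tendsto (fun n : ℕ => (α * δ) * (n : ℝ)) atTop atTop :=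
      Tendsto.const_mul_atTop (by positivity) tendsto_natCast_atTop_atTop
    have heq : (fun n : ℕ => -α * ((n : ℝ) * δ)) = fun n : ℕ => -((α * δ) * (n : ℝ)) := by
      funext n; ring
    rw [heq]
    exact tendsto_neg_atTop_atBot.comp h1
  obtain ⟨N₁, hN₁⟩ := eventually_atTop.mp
    (hexp.eventually_lt_const (Real.rpow_pos_of_pos hδ α))
  set N : ℕ := max N₀ N₁ + 1 with hNdef
  refine ⟨((N : ℝ) + 1) * δ, fun x hx => ?_⟩
  have hxpos : 0 < x := lt_of_lt_of_le (by positivity) hx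
  have hxδ : ((N + 1 : ℕ) : ℝ) ≤ x / δ := by
    rw [le_div_iff₀ hδ, Nat.cast_add, Nat.cast_one]; linarith
  set n : ℕ := ⌊x / δ⌋₊ with hn
  have hnge : N + 1 ≤ n := Nat.le_floor hxδ
  have hnN₀ : N₀ ≤ n := le_trans (le_trans (le_max_left _ _) (Nat.le_succ _)) (Nat.le_of_succ_le hnge)
  have hnN₁ : N₁ ≤ n := le_trans (le_trans (le_max_right _ _) (Nat.le_succ _)) (Nat.le_of_succ_le hnge)
  have hfl : (n : ℝ) ≤ x / δ := Nat.floor_le (by positivity)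
  have hfl2 : x / δ < n + 1 := Nat.lt_floor_add_one _
  have ha : (n : ℝ) * δ ≤ x := (le_div_iff₀ hδ).mp hfl
  have hb : x < ((n : ℝ) + 1) * δ := (div_lt_iff₀ hδ).mp hfl2
  have hnpos : 0 < n := lt_of_lt_of_le (Nat.succ_pos _) hnge
  have hapos : 0 < (n : ℝ) * δ := mul_pos (by exact_mod_cast hnpos) hδ
  -- grid values
  have hFa : |F ((n : ℝ) * δ) - L| < ε / 4 := by
    have := hN₀ n hnN₀; rwa [Real.dist_eq] at this
  have hFb : |F (((n : ℝ) + 1) * δ) - L| < ε / 4 := by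
    have := hN₀ (n + 1) (le_trans hnN₀ (Nat.le_succ _))
    rw [Real.dist_eq] at this
    have hcast : ((n + 1 : ℕ) : ℝ) * δ = ((n : ℝ) + 1) * δ := by push_cast; ring
    rwa [hcast] at this
  have hexpa : Real.exp (-α * ((n : ℝ) * δ)) < δ ^ α := hN₁ n hnN₁
  -- modulus estimates from a := n δ
  have key : ∀ t : ℝ, 0 < t → t ≤ δ →
      |F₂ ((n : ℝ) * δ + t) - F₂ ((n : ℝ) * δ)| ≤ ε / 8 := by
    intro t ht htδ
    have hmax : max (t ^ α) (Real.exp (-α * ((n : ℝ) * δ))) ≤ δ ^ α :=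
      max_le (Real.rpow_le_rpow ht.le htδ hα.le) hexpa.le
    calc |F₂ ((n : ℝ) * δ + t) - F₂ ((n : ℝ) * δ)|
        ≤ C * max (t ^ α) (Real.exp (-α * ((n : ℝ) * δ))) := h₂ _ t hapos ht
      _ ≤ C * δ ^ α := mul_le_mul_of_nonneg_left hmax hC.le
      _ ≤ ε / 8 := hCδ
  rw [Real.dist_eq]
  rcases eq_or_lt_of_le ha with heq | hlt
  · rw [← heq]
    linarith [hFa, abs_nonneg (F ((n : ℝ) * δ) - L)]
  · -- n δ < x < (n+1) δ
    have h2x : |F₂ x - F₂ ((n : ℝ) * δ)| ≤ ε / 8 := by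
      have := key (x - (n : ℝ) * δ) (by linarith) (by nlinarith)
      have hcx : (n : ℝ) * δ + (x - (n : ℝ) * δ) = x := by ring
      rwa [hcx] at this
    have h2b : |F₂ (((n : ℝ) + 1) * δ) - F₂ ((n : ℝ) * δ)| ≤ ε / 8 := by
      have := key δ hδ le_rfl
      have hcb : (n : ℝ) * δ + δ = ((n : ℝ) + 1) * δ := by ring
      rwa [hcb] at this
    have hbpos : 0 < ((n : ℝ) + 1) * δ := by positivity
    have hm1 : F₁ ((n : ℝ) * δ) ≤ F₁ x := h₁ _ _ hapos ha
    have hm2 : F₁ x ≤ F₁ (((n : ℝ) + 1) * δ) := h₁ _ _ hxpos hb.le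
    rw [h₃ x hxpos]
    rw [h₃ _ hapos] at hFa
    rw [h₃ _ hbpos] at hFb
    obtain ⟨hFa1, hFa2⟩ := abs_lt.mp hFa
    obtain ⟨hFb1, hFb2⟩ := abs_lt.mp hFb
    obtain ⟨h2x1, h2x2⟩ := abs_le.mp h2x
    obtain ⟨h2b1, h2b2⟩ := abs_le.mp h2b
    rw [abs_lt]
    constructor <;> linarith
end

section
/- Let D ⊂ ℝ^d be an open set and let (f_n)_{n≥1} be a sequence of random measurable real-valued functions on D (defined on a common probability space) such that for every compact K ⊂ D, ∫_K E[|f_n(x)|²] dx < ∞ for all n, and such that there exists a summable sequence (a_n)_{n≥1} of positive reals with ∬_{K×K} |E[(f_{n+1}(x) − f_n(x))·(f_{n+1}(y) − f_n(y))]| dx dy ≤ a_n³ for all n. Then for every continuous function g : ℝ^d → ℝ with compact support contained in D, the sequence of random variables ⟨f_n, g⟩ = ∫_D f_n(x) g(x) dx converges almost surely as n → ∞. -/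
open MeasureTheory ProbabilityTheory Filter
open scoped ENNReal

set_option maxHeartbeats 1000000

private lemma abs_le_half_add_sq_div {u ε : ℝ} (hε : 0 < ε) :
    |u| ≤ ε / 2 + u ^ 2 * (1 / (2 * ε)) := by
  have hkey : 2 * ε * |u| ≤ ε * ε + u ^ 2 := by
    nlinarith [sq_nonneg (|u| - ε), sq_abs u]
  have h4 : |u| ≤ (ε * ε + u ^ 2) / (2 * ε) := by
    rw [le_div_iff₀ (by positivity)]
    nlinarith
  refine h4.trans (le_of_eq ?_)
  field_simp

/-- If a sequence of random functions `f_n` on an open set `D ⊆ ℝ^d` has locally finite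
second moments and the covariances of successive increments decay summably
(`∬_{K×K} |E[(f_{n+1}-f_n)(x)(f_{n+1}-f_n)(y)]| dx dy ≤ a_n³` with `∑ a_n < ∞`), then
for every continuous `g` compactly supported in `D`, the pairings `⟨f_n, g⟩` converge
almost surely. -/
theorem random_field_pairing_converges
    {d : ℕ} (hd : 0 < d)
    {Ω : Type*} [MeasureSpace Ω] [IsProbabilityMeasure (ℙ : Measure Ω)]
    (D : Set (Fin d → ℝ)) (hD : IsOpen D)
    (f : ℕ → (Fin d → ℝ) → Ω → ℝ)
    (hmeas : ∀ n, Measurable (Function.uncurry (f n)))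
    (hL2 : ∀ K : Set (Fin d → ℝ), IsCompact K → K ⊆ D → ∀ n : ℕ,
      (∫⁻ x in K, (∫⁻ ω, ENNReal.ofReal ((f n x ω) ^ 2) ∂ℙ) ∂volume) < ⊤)
    (hcov : ∀ K : Set (Fin d → ℝ), IsCompact K → K ⊆ D →
      ∃ a : ℕ → ℝ, (∀ n, 0 < a n) ∧ Summable a ∧ ∀ n : ℕ,
        (∫⁻ x in K, (∫⁻ y in K,
            ENNReal.ofReal
              |∫ ω, (f (n+1) x ω - f n x ω) * (f (n+1) y ω - f n y ω) ∂ℙ|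
          ∂volume) ∂volume) ≤ ENNReal.ofReal ((a n) ^ 3)) :
    ∀ g : (Fin d → ℝ) → ℝ, Continuous g → HasCompactSupport g → tsupport g ⊆ D →
      ∀ᵐ ω ∂ℙ, ∃ l : ℝ,
        Tendsto (fun n : ℕ => ∫ x in D, f n x ω * g x ∂volume) atTop (nhds l) := by
  intro g hg hgsupp hgD
  set K : Set (Fin d → ℝ) := tsupport g with hKdef
  have hK : IsCompact K := hgsupp
  have hKm : MeasurableSet K := (isClosed_tsupport g).measurableSet
  obtain ⟨M, hMnorm⟩ := hgsupp.exists_bound_of_continuous hg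
  have hgle : ∀ x, |g x| ≤ M := fun x => by simpa [Real.norm_eq_abs] using hMnorm x
  have hM0 : 0 ≤ M := le_trans (abs_nonneg _) (hgle (fun _ => 0))
  obtain ⟨a, hapos, hasum, habd⟩ := hcov K hK hgD
  -- the pairings, as integrals over K
  set X : ℕ → Ω → ℝ := fun n ω => ∫ x in K, f n x ω * g x ∂volume with hXdef
  -- the integral over D equals the integral over K
  have hDK : ∀ (n : ℕ) (ω : Ω), (∫ x in D, f n x ω * g x ∂volume) = X n ω := by
    intro n ω
    have hfeq : (fun x => f n x ω * g x) = K.indicator (fun x => f n x ω * g x) := by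
      funext x
      by_cases hx : x ∈ K
      · rw [Set.indicator_of_mem hx]
      · rw [Set.indicator_of_notMem hx, image_eq_zero_of_notMem_tsupport hx, mul_zero]
    rw [hXdef]
    simp only
    rw [hfeq, setIntegral_indicator hKm, setIntegral_indicator hKm,
      Set.inter_eq_right.mpr hgD, Set.inter_self]
  -- basic measurability
  have hfmx : ∀ (n : ℕ) (ω : Ω), Measurable (fun x => f n x ω) := fun n ω =>
    (hmeas n).comp (measurable_id.prodMk measurable_const)
  have hfmω : ∀ (n : ℕ) (x : Fin d → ℝ), Measurable (fun ω => f n x ω) := fun n x =>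
    (hmeas n).comp (measurable_const.prodMk measurable_id)
  have hXm : ∀ n, Measurable (X n) := by
    intro n
    have h1 : StronglyMeasurable
        (Function.uncurry fun (ω : Ω) (x : Fin d → ℝ) => f n x ω * g x) :=
      (((hmeas n).comp measurable_swap).mul
        (hg.measurable.comp measurable_snd)).stronglyMeasurable
    exact h1.integral_prod_right.measurable
  -- second moments of the increments
  have hδm : ∀ n : ℕ, Measurable (Function.uncurry fun x ω => f (n+1) x ω - f n x ω) :=
    fun n => (hmeas (n+1)).sub (hmeas n)
  have hδ2meas : ∀ n : ℕ, Measurable (fun p : (Fin d → ℝ) × Ω =>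
      ENNReal.ofReal ((f (n+1) p.1 p.2 - f n p.1 p.2) ^ 2)) :=
    fun n => ((hδm n).pow_const 2).ennreal_ofReal
  have hΔL2 : ∀ n : ℕ,
      (∫⁻ x in K, (∫⁻ ω, ENNReal.ofReal ((f (n+1) x ω - f n x ω) ^ 2) ∂ℙ) ∂volume) < ⊤ := by
    intro n
    have hb : ∀ x ω, ENNReal.ofReal ((f (n+1) x ω - f n x ω) ^ 2) ≤
        2 * ENNReal.ofReal ((f (n+1) x ω) ^ 2) + 2 * ENNReal.ofReal ((f n x ω) ^ 2) := by
      intro x ω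
      have h1 : (f (n+1) x ω - f n x ω) ^ 2 ≤ 2 * (f (n+1) x ω) ^ 2 + 2 * (f n x ω) ^ 2 := by
        nlinarith [sq_nonneg (f (n+1) x ω + f n x ω)]
      calc ENNReal.ofReal ((f (n+1) x ω - f n x ω) ^ 2)
          ≤ ENNReal.ofReal (2 * (f (n+1) x ω) ^ 2 + 2 * (f n x ω) ^ 2) :=
            ENNReal.ofReal_le_ofReal h1
        _ = 2 * ENNReal.ofReal ((f (n+1) x ω) ^ 2) + 2 * ENNReal.ofReal ((f n x ω) ^ 2) := by
            rw [ENNReal.ofReal_add (by positivity) (by positivity),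
              ENNReal.ofReal_mul (by norm_num), ENNReal.ofReal_mul (by norm_num),
              ENNReal.ofReal_ofNat]
    calc (∫⁻ x in K, (∫⁻ ω, ENNReal.ofReal ((f (n+1) x ω - f n x ω) ^ 2) ∂ℙ) ∂volume)
        ≤ ∫⁻ x in K, (2 * (∫⁻ ω, ENNReal.ofReal ((f (n+1) x ω) ^ 2) ∂ℙ)
            + 2 * (∫⁻ ω, ENNReal.ofReal ((f n x ω) ^ 2) ∂ℙ)) ∂volume := by
          refine lintegral_mono fun x => ?_
          calc (∫⁻ ω, ENNReal.ofReal ((f (n+1) x ω - f n x ω) ^ 2) ∂ℙ)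
              ≤ ∫⁻ ω, (2 * ENNReal.ofReal ((f (n+1) x ω) ^ 2)
                  + 2 * ENNReal.ofReal ((f n x ω) ^ 2)) ∂ℙ := lintegral_mono (hb x)
            _ = 2 * (∫⁻ ω, ENNReal.ofReal ((f (n+1) x ω) ^ 2) ∂ℙ)
                  + 2 * (∫⁻ ω, ENNReal.ofReal ((f n x ω) ^ 2) ∂ℙ) := by
                rw [lintegral_add_left (((hfmω (n+1) x).pow_const 2).ennreal_ofReal.const_mul 2),
                  lintegral_const_mul 2 ((hfmω (n+1) x).pow_const 2).ennreal_ofReal,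
                  lintegral_const_mul 2 ((hfmω n x).pow_const 2).ennreal_ofReal]
      _ = 2 * (∫⁻ x in K, (∫⁻ ω, ENNReal.ofReal ((f (n+1) x ω) ^ 2) ∂ℙ) ∂volume)
            + 2 * (∫⁻ x in K, (∫⁻ ω, ENNReal.ofReal ((f n x ω) ^ 2) ∂ℙ) ∂volume) := by
          have hm1 : Measurable (fun x => ∫⁻ ω, ENNReal.ofReal ((f (n+1) x ω) ^ 2) ∂ℙ) :=
            Measurable.lintegral_prod_right
              (f := fun x ω => ENNReal.ofReal ((f (n+1) x ω) ^ 2))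
              (by exact ((hmeas (n+1)).pow_const 2).ennreal_ofReal)
          have hm2 : Measurable (fun x => ∫⁻ ω, ENNReal.ofReal ((f n x ω) ^ 2) ∂ℙ) :=
            Measurable.lintegral_prod_right
              (f := fun x ω => ENNReal.ofReal ((f n x ω) ^ 2))
              (by exact ((hmeas n).pow_const 2).ennreal_ofReal)
          rw [lintegral_add_left (hm1.const_mul 2), lintegral_const_mul 2 hm1,
            lintegral_const_mul 2 hm2]
      _ < ⊤ := by
          refine ENNReal.add_lt_top.mpr ⟨?_, ?_⟩ <;>
            exact ENNReal.mul_lt_top (by norm_num) (hL2 K hK hgD _)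
  -- almost every ω gives integrable sample paths against g
  have hIntAE : ∀ᵐ ω ∂ℙ, ∀ m : ℕ,
      Integrable (fun x => f m x ω * g x) (volume.restrict K) := by
    rw [ae_all_iff]
    intro m
    have hum : AEMeasurable
        (Function.uncurry fun (x : Fin d → ℝ) (ω : Ω) => ENNReal.ofReal ((f m x ω) ^ 2))
        ((volume.restrict K).prod ℙ) :=
      (((hmeas m).pow_const 2).ennreal_ofReal).aemeasurable
    have hswap : (∫⁻ ω, (∫⁻ x in K, ENNReal.ofReal ((f m x ω) ^ 2) ∂volume) ∂ℙ)
        = ∫⁻ x in K, (∫⁻ ω, ENNReal.ofReal ((f m x ω) ^ 2) ∂ℙ) ∂volume :=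
      (lintegral_lintegral_swap hum).symm
    have hmeasω : AEMeasurable
        (fun ω => ∫⁻ x in K, ENNReal.ofReal ((f m x ω) ^ 2) ∂volume) ℙ :=
      (Measurable.lintegral_prod_left
        (f := fun x ω => ENNReal.ofReal ((f m x ω) ^ 2))
        (by exact ((hmeas m).pow_const 2).ennreal_ofReal)).aemeasurable
    have hfin : (∫⁻ ω, (∫⁻ x in K, ENNReal.ofReal ((f m x ω) ^ 2) ∂volume) ∂ℙ) ≠ ⊤ := by
      rw [hswap]; exact (hL2 K hK hgD m).ne
    filter_upwards [ae_lt_top' hmeasω hfin] with ω hω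
    refine ⟨((hfmx m ω).mul hg.measurable).aestronglyMeasurable, ?_⟩
    rw [hasFiniteIntegral_iff_norm]
    calc (∫⁻ x in K, ENNReal.ofReal ‖f m x ω * g x‖ ∂volume)
        ≤ ∫⁻ x in K, (ENNReal.ofReal (M / 2)
            * (1 + ENNReal.ofReal ((f m x ω) ^ 2))) ∂volume := by
          refine lintegral_mono fun x => ?_
          have h1 : ‖f m x ω * g x‖ ≤ M / 2 * (1 + (f m x ω) ^ 2) := by
            rw [Real.norm_eq_abs, abs_mul]
            have h2 := hgle x
            have h3 : |f m x ω| * |g x| ≤ |f m x ω| * M :=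
              mul_le_mul_of_nonneg_left h2 (abs_nonneg _)
            refine h3.trans ?_
            nlinarith [sq_nonneg (|f m x ω| - 1), sq_abs (f m x ω), abs_nonneg (f m x ω)]
          calc ENNReal.ofReal ‖f m x ω * g x‖
              ≤ ENNReal.ofReal (M / 2 * (1 + (f m x ω) ^ 2)) := ENNReal.ofReal_le_ofReal h1
            _ = ENNReal.ofReal (M / 2) * (1 + ENNReal.ofReal ((f m x ω) ^ 2)) := by
                rw [ENNReal.ofReal_mul (by positivity),
                  ENNReal.ofReal_add (by norm_num) (by positivity), ENNReal.ofReal_one]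
      _ = ENNReal.ofReal (M / 2)
            * (volume K + ∫⁻ x in K, ENNReal.ofReal ((f m x ω) ^ 2) ∂volume) := by
          rw [lintegral_const_mul _ (f := fun x => 1 + ENNReal.ofReal ((f m x ω) ^ 2)) (measurable_const.add
            ((hfmx m ω).pow_const 2).ennreal_ofReal),
            lintegral_add_left measurable_const, lintegral_const,
            Measure.restrict_apply_univ, one_mul]
      _ < ⊤ := ENNReal.mul_lt_top ENNReal.ofReal_lt_top
          (ENNReal.add_lt_top.mpr ⟨hK.measure_lt_top, hω⟩)
  -- key second-moment bound for increments of the pairings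
  have key : ∀ n : ℕ, (∫⁻ ω, ENNReal.ofReal ((X (n+1) ω - X n ω) ^ 2) ∂ℙ)
      ≤ ENNReal.ofReal (M ^ 2 * a n ^ 3) := by
    intro n
    set μK : Measure (Fin d → ℝ) := volume.restrict K with hμK
    set ν : Measure ((Fin d → ℝ) × (Fin d → ℝ)) := μK.prod μK with hν
    set H : Ω → (Fin d → ℝ) × (Fin d → ℝ) → ℝ := fun ω z =>
      ((f (n+1) z.1 ω - f n z.1 ω) * g z.1) * ((f (n+1) z.2 ω - f n z.2 ω) * g z.2) with hH
    have hHm : Measurable (Function.uncurry H) := by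
      have h1 : Measurable fun p : Ω × ((Fin d → ℝ) × (Fin d → ℝ)) =>
          f (n+1) p.2.1 p.1 - f n p.2.1 p.1 :=
        (hδm n).comp ((measurable_fst.comp measurable_snd).prodMk measurable_fst)
      have h2 : Measurable fun p : Ω × ((Fin d → ℝ) × (Fin d → ℝ)) =>
          f (n+1) p.2.2 p.1 - f n p.2.2 p.1 :=
        (hδm n).comp ((measurable_snd.comp measurable_snd).prodMk measurable_fst)
      exact ((h1.mul (hg.measurable.comp (measurable_fst.comp measurable_snd))).mul
        (h2.mul (hg.measurable.comp (measurable_snd.comp measurable_snd))))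
    -- integrability of H over the product
    have hHint : Integrable (Function.uncurry H) ((ℙ : Measure Ω).prod ν) := by
      refine ⟨hHm.aestronglyMeasurable, ?_⟩
      rw [hasFiniteIntegral_iff_norm]
      have hIAm : Measurable (fun ω =>
          ∫⁻ x, ENNReal.ofReal ((f (n+1) x ω - f n x ω) ^ 2) ∂μK) :=
        Measurable.lintegral_prod_left
          (f := fun x ω => ENNReal.ofReal ((f (n+1) x ω - f n x ω) ^ 2))
          (by exact ((hδm n).pow_const 2).ennreal_ofReal)
      have hIAfin : (∫⁻ ω, (∫⁻ x, ENNReal.ofReal ((f (n+1) x ω - f n x ω) ^ 2) ∂μK) ∂ℙ) < ⊤ := by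
        calc (∫⁻ ω, (∫⁻ x, ENNReal.ofReal ((f (n+1) x ω - f n x ω) ^ 2) ∂μK) ∂ℙ)
            = ∫⁻ x, (∫⁻ ω, ENNReal.ofReal ((f (n+1) x ω - f n x ω) ^ 2) ∂ℙ) ∂μK :=
              (lintegral_lintegral_swap (hδ2meas n).aemeasurable).symm
          _ < ⊤ := hΔL2 n
      calc (∫⁻ p, ENNReal.ofReal ‖Function.uncurry H p‖ ∂((ℙ : Measure Ω).prod ν))
          = ∫⁻ ω, (∫⁻ z, ENNReal.ofReal ‖H ω z‖ ∂ν) ∂ℙ :=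
            lintegral_prod _ (hHm.norm.ennreal_ofReal).aemeasurable
        _ ≤ ∫⁻ ω, (ENNReal.ofReal (M ^ 2) *
              (2 * volume K * (∫⁻ x, ENNReal.ofReal ((f (n+1) x ω - f n x ω) ^ 2) ∂μK))) ∂ℙ := by
            refine lintegral_mono fun ω => ?_
            have hpt : ∀ z : (Fin d → ℝ) × (Fin d → ℝ),
                ENNReal.ofReal ‖H ω z‖ ≤ ENNReal.ofReal (M ^ 2) *
                  (ENNReal.ofReal ((f (n+1) z.1 ω - f n z.1 ω) ^ 2)
                    + ENNReal.ofReal ((f (n+1) z.2 ω - f n z.2 ω) ^ 2)) := by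
              intro z
              have h1 : ‖H ω z‖ ≤ M ^ 2 * ((f (n+1) z.1 ω - f n z.1 ω) ^ 2
                  + (f (n+1) z.2 ω - f n z.2 ω) ^ 2) := by
                rw [Real.norm_eq_abs]
                simp only [hH]
                set u := f (n+1) z.1 ω - f n z.1 ω
                set v := f (n+1) z.2 ω - f n z.2 ω
                clear_value u v
                have h2 : |u * g z.1 * (v * g z.2)| = |u| * |g z.1| * (|v| * |g z.2|) := by
                  rw [abs_mul, abs_mul, abs_mul]
                rw [h2]
                have h3 := hgle z.1
                have h4 := hgle z.2
                have h5 : |u| * |g z.1| * (|v| * |g z.2|)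
                    = (|u| * |v|) * (|g z.1| * |g z.2|) := by ring
                have h6 : |g z.1| * |g z.2| ≤ M * M :=
                  mul_le_mul h3 h4 (abs_nonneg _) hM0
                have h7 : |u| * |v| ≤ (u ^ 2 + v ^ 2) / 2 := by
                  have h9 := two_mul_le_add_sq |u| |v|
                  rw [sq_abs, sq_abs] at h9
                  linarith
                have h8 : (|u| * |v|) * (|g z.1| * |g z.2|)
                    ≤ ((u ^ 2 + v ^ 2) / 2) * (M * M) :=
                  mul_le_mul h7 h6 (mul_nonneg (abs_nonneg _) (abs_nonneg _))
                    (by positivity)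
                rw [h5]
                refine h8.trans ?_
                nlinarith [sq_nonneg u, sq_nonneg v, sq_nonneg M]
              calc ENNReal.ofReal ‖H ω z‖
                  ≤ ENNReal.ofReal (M ^ 2 * ((f (n+1) z.1 ω - f n z.1 ω) ^ 2
                      + (f (n+1) z.2 ω - f n z.2 ω) ^ 2)) := ENNReal.ofReal_le_ofReal h1
                _ = ENNReal.ofReal (M ^ 2) *
                    (ENNReal.ofReal ((f (n+1) z.1 ω - f n z.1 ω) ^ 2)
                      + ENNReal.ofReal ((f (n+1) z.2 ω - f n z.2 ω) ^ 2)) := by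
                    rw [ENNReal.ofReal_mul (by positivity),
                      ENNReal.ofReal_add (by positivity) (by positivity)]
            calc (∫⁻ z, ENNReal.ofReal ‖H ω z‖ ∂ν)
                ≤ ∫⁻ z, (ENNReal.ofReal (M ^ 2) *
                    (ENNReal.ofReal ((f (n+1) z.1 ω - f n z.1 ω) ^ 2)
                      + ENNReal.ofReal ((f (n+1) z.2 ω - f n z.2 ω) ^ 2))) ∂ν :=
                  lintegral_mono hpt
              _ = ENNReal.ofReal (M ^ 2) * ∫⁻ z,
                    (ENNReal.ofReal ((f (n+1) z.1 ω - f n z.1 ω) ^ 2)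
                      + ENNReal.ofReal ((f (n+1) z.2 ω - f n z.2 ω) ^ 2)) ∂ν := by
                  have hma : Measurable fun z : (Fin d → ℝ) × (Fin d → ℝ) =>
                      ENNReal.ofReal ((f (n+1) z.1 ω - f n z.1 ω) ^ 2) :=
                    ((((hfmx (n+1) ω).sub (hfmx n ω)).comp measurable_fst).pow_const
                      2).ennreal_ofReal
                  have hmb : Measurable fun z : (Fin d → ℝ) × (Fin d → ℝ) =>
                      ENNReal.ofReal ((f (n+1) z.2 ω - f n z.2 ω) ^ 2) :=
                    ((((hfmx (n+1) ω).sub (hfmx n ω)).comp measurable_snd).pow_const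
                      2).ennreal_ofReal
                  exact lintegral_const_mul _ (hma.add hmb)
              _ = ENNReal.ofReal (M ^ 2) *
                    (2 * volume K * (∫⁻ x, ENNReal.ofReal ((f (n+1) x ω - f n x ω) ^ 2) ∂μK)) := by
                  congr 1
                  have hmx : Measurable fun x : Fin d → ℝ =>
                      ENNReal.ofReal ((f (n+1) x ω - f n x ω) ^ 2) :=
                    (((hfmx (n+1) ω).sub (hfmx n ω)).pow_const 2).ennreal_ofReal
                  rw [hν, lintegral_prod
                    (fun z : (Fin d → ℝ) × (Fin d → ℝ) =>
                      ENNReal.ofReal ((f (n+1) z.1 ω - f n z.1 ω) ^ 2)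
                        + ENNReal.ofReal ((f (n+1) z.2 ω - f n z.2 ω) ^ 2))
                    (by exact ((hmx.comp measurable_fst).add
                      (hmx.comp measurable_snd)).aemeasurable)]
                  calc (∫⁻ x, (∫⁻ y, (ENNReal.ofReal ((f (n+1) x ω - f n x ω) ^ 2)
                        + ENNReal.ofReal ((f (n+1) y ω - f n y ω) ^ 2)) ∂μK) ∂μK)
                      = ∫⁻ x, (ENNReal.ofReal ((f (n+1) x ω - f n x ω) ^ 2) * volume K
                          + ∫⁻ y, ENNReal.ofReal ((f (n+1) y ω - f n y ω) ^ 2) ∂μK) ∂μK := by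
                        refine lintegral_congr fun x => ?_
                        rw [lintegral_add_left measurable_const, lintegral_const, hμK,
                          Measure.restrict_apply_univ]
                    _ = (∫⁻ x, ENNReal.ofReal ((f (n+1) x ω - f n x ω) ^ 2) ∂μK) * volume K
                          + (∫⁻ y, ENNReal.ofReal ((f (n+1) y ω - f n y ω) ^ 2) ∂μK)
                            * volume K := by
                        rw [lintegral_add_right _ measurable_const, lintegral_const,
                          lintegral_mul_const _ hmx, hμK, Measure.restrict_apply_univ]
                    _ = 2 * volume K
                          * (∫⁻ x, ENNReal.ofReal ((f (n+1) x ω - f n x ω) ^ 2) ∂μK) := by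
                        ring
        _ = ENNReal.ofReal (M ^ 2) * (2 * volume K *
              ∫⁻ ω, (∫⁻ x, ENNReal.ofReal ((f (n+1) x ω - f n x ω) ^ 2) ∂μK) ∂ℙ) := by
            rw [lintegral_const_mul _ (hIAm.const_mul _), lintegral_const_mul _ hIAm]
        _ < ⊤ := by
            refine ENNReal.mul_lt_top ENNReal.ofReal_lt_top ?_
            exact ENNReal.mul_lt_top
              (ENNReal.mul_lt_top (by norm_num) hK.measure_lt_top) hIAfin
    -- a.e. identification of the squared increment with a double integral
    have hae : ∀ᵐ ω ∂ℙ, (X (n+1) ω - X n ω) ^ 2 = ∫ z, H ω z ∂ν := by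
      filter_upwards [hIntAE] with ω hω
      have h1 : X (n+1) ω - X n ω = ∫ x, (f (n+1) x ω - f n x ω) * g x ∂μK := by
        rw [hXdef]
        simp only
        rw [← integral_sub (hω (n+1)) (hω n)]
        exact integral_congr_ae (Filter.Eventually.of_forall fun x => by ring)
      have h2 : (∫ x, (f (n+1) x ω - f n x ω) * g x ∂μK) ^ 2 = ∫ z, H ω z ∂ν := by
        rw [sq, ← integral_prod_mul (f := fun x => (f (n+1) x ω - f n x ω) * g x)
          (g := fun x => (f (n+1) x ω - f n x ω) * g x)]
      rw [h1, h2]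
    have hΦint : Integrable (fun ω => ∫ z, H ω z ∂ν) ℙ := hHint.integral_prod_left
    have hΦnn : 0 ≤ᵐ[ℙ] fun ω => ∫ z, H ω z ∂ν := by
      filter_upwards [hae] with ω h
      rw [← h]; exact sq_nonneg _
    -- the covariance kernel
    set C : (Fin d → ℝ) × (Fin d → ℝ) → ℝ := fun z =>
      ∫ ω, (f (n+1) z.1 ω - f n z.1 ω) * (f (n+1) z.2 ω - f n z.2 ω) ∂ℙ with hC
    have hCsm : StronglyMeasurable C := by
      have h1 : Measurable fun p : ((Fin d → ℝ) × (Fin d → ℝ)) × Ω =>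
          (f (n+1) p.1.1 p.2 - f n p.1.1 p.2) * (f (n+1) p.1.2 p.2 - f n p.1.2 p.2) := by
        have ha : Measurable fun p : ((Fin d → ℝ) × (Fin d → ℝ)) × Ω =>
            f (n+1) p.1.1 p.2 - f n p.1.1 p.2 :=
          (hδm n).comp ((measurable_fst.comp measurable_fst).prodMk measurable_snd)
        have hb : Measurable fun p : ((Fin d → ℝ) × (Fin d → ℝ)) × Ω =>
            f (n+1) p.1.2 p.2 - f n p.1.2 p.2 :=
          (hδm n).comp ((measurable_snd.comp measurable_fst).prodMk measurable_snd)
        exact ha.mul hb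
      exact h1.stronglyMeasurable.integral_prod_right'
    have hCabs : Measurable fun z => ENNReal.ofReal |C z| :=
      (continuous_abs.measurable.comp hCsm.measurable).ennreal_ofReal
    calc (∫⁻ ω, ENNReal.ofReal ((X (n+1) ω - X n ω) ^ 2) ∂ℙ)
        = ∫⁻ ω, ENNReal.ofReal (∫ z, H ω z ∂ν) ∂ℙ :=
          lintegral_congr_ae (hae.mono fun ω h => by simp only [h])
      _ = ENNReal.ofReal (∫ ω, (∫ z, H ω z ∂ν) ∂ℙ) :=
          (ofReal_integral_eq_lintegral_ofReal hΦint hΦnn).symm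
      _ = ENNReal.ofReal (∫ z, (g z.1 * g z.2) * C z ∂ν) := by
          rw [integral_integral_swap hHint]
          congr 1
          refine integral_congr_ae (Filter.Eventually.of_forall fun z => ?_)
          rw [hC]
          simp only
          rw [← integral_const_mul]
          exact integral_congr_ae (Filter.Eventually.of_forall fun ω => by ring)
      _ ≤ ∫⁻ z, ENNReal.ofReal (M ^ 2 * |C z|) ∂ν := by
          calc ENNReal.ofReal (∫ z, g z.1 * g z.2 * C z ∂ν)
              ≤ (‖∫ z, g z.1 * g z.2 * C z ∂ν‖₊ : ℝ≥0∞) := by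
                rw [← enorm_eq_nnnorm, Real.enorm_eq_ofReal_abs]
                exact ENNReal.ofReal_le_ofReal (le_abs_self _)
            _ ≤ ∫⁻ z, (‖g z.1 * g z.2 * C z‖₊ : ℝ≥0∞) ∂ν :=
                enorm_integral_le_lintegral_enorm _
            _ ≤ ∫⁻ z, ENNReal.ofReal (M ^ 2 * |C z|) ∂ν := by
                refine lintegral_mono fun z => ?_
                rw [← enorm_eq_nnnorm, Real.enorm_eq_ofReal_abs]
                refine ENNReal.ofReal_le_ofReal ?_
                rw [abs_mul]
                refine mul_le_mul_of_nonneg_right ?_ (abs_nonneg _)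
                rw [abs_mul, sq]
                exact mul_le_mul (hgle z.1) (hgle z.2) (abs_nonneg _) hM0
      _ = ENNReal.ofReal (M ^ 2) * ∫⁻ z, ENNReal.ofReal |C z| ∂ν := by
          rw [show (fun z : (Fin d → ℝ) × (Fin d → ℝ) => ENNReal.ofReal (M ^ 2 * |C z|))
              = fun z => ENNReal.ofReal (M ^ 2) * ENNReal.ofReal |C z| from
            funext fun z => ENNReal.ofReal_mul (sq_nonneg M)]
          exact lintegral_const_mul _ hCabs
      _ ≤ ENNReal.ofReal (M ^ 2) * ENNReal.ofReal (a n ^ 3) := by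
          refine mul_le_mul_right ?_ _
          rw [hν, lintegral_prod _ hCabs.aemeasurable]
          exact habd n
      _ = ENNReal.ofReal (M ^ 2 * a n ^ 3) := (ENNReal.ofReal_mul (sq_nonneg M)).symm
  -- first-moment bound for increments
  have keyabs : ∀ n : ℕ, (∫⁻ ω, ENNReal.ofReal |X (n+1) ω - X n ω| ∂ℙ)
      ≤ ENNReal.ofReal ((1 + M ^ 2) / 2 * (a n * Real.sqrt (a n))) := by
    intro n
    set ε : ℝ := a n * Real.sqrt (a n) with hεdef
    have hε0 : 0 < ε := mul_pos (hapos n) (Real.sqrt_pos.mpr (hapos n))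
    have hε2 : ε * ε = a n ^ 3 := by
      rw [hεdef]
      have h1 : Real.sqrt (a n) * Real.sqrt (a n) = a n := Real.mul_self_sqrt (hapos n).le
      calc a n * Real.sqrt (a n) * (a n * Real.sqrt (a n))
          = a n * a n * (Real.sqrt (a n) * Real.sqrt (a n)) := by ring
        _ = a n ^ 3 := by rw [h1]; ring
    have hhalf : (0:ℝ) ≤ ε / 2 := by linarith
    have hinv : (0:ℝ) ≤ 1 / (2 * ε) := by positivity
    have hmeasΔX2 : Measurable fun ω => ENNReal.ofReal ((X (n+1) ω - X n ω) ^ 2) :=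
      (((hXm (n+1)).sub (hXm n)).pow_const 2).ennreal_ofReal
    calc (∫⁻ ω, ENNReal.ofReal |X (n+1) ω - X n ω| ∂ℙ)
        ≤ ∫⁻ ω, (ENNReal.ofReal (ε / 2)
            + ENNReal.ofReal (1 / (2 * ε)) * ENNReal.ofReal ((X (n+1) ω - X n ω) ^ 2)) ∂ℙ := by
          refine lintegral_mono fun ω => ?_
          have h := abs_le_half_add_sq_div (u := X (n+1) ω - X n ω) hε0
          calc ENNReal.ofReal |X (n+1) ω - X n ω|
              ≤ ENNReal.ofReal (ε / 2 + (X (n+1) ω - X n ω) ^ 2 * (1 / (2 * ε))) :=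
                ENNReal.ofReal_le_ofReal h
            _ = ENNReal.ofReal (ε / 2)
                + ENNReal.ofReal (1 / (2 * ε)) * ENNReal.ofReal ((X (n+1) ω - X n ω) ^ 2) := by
                rw [ENNReal.ofReal_add hhalf (mul_nonneg (sq_nonneg _) hinv),
                  ENNReal.ofReal_mul (sq_nonneg _), mul_comm]
      _ = ENNReal.ofReal (ε / 2) + ENNReal.ofReal (1 / (2 * ε))
            * ∫⁻ ω, ENNReal.ofReal ((X (n+1) ω - X n ω) ^ 2) ∂ℙ := by
          rw [lintegral_add_left measurable_const, lintegral_const, measure_univ, mul_one,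
            lintegral_const_mul _ hmeasΔX2]
      _ ≤ ENNReal.ofReal (ε / 2) + ENNReal.ofReal (1 / (2 * ε))
            * ENNReal.ofReal (M ^ 2 * a n ^ 3) :=
          add_le_add_right (mul_le_mul_right (key n) _) _
      _ = ENNReal.ofReal (ε / 2 + 1 / (2 * ε) * (M ^ 2 * a n ^ 3)) := by
          rw [← ENNReal.ofReal_mul hinv,
            ← ENNReal.ofReal_add hhalf (mul_nonneg hinv
              (mul_nonneg (sq_nonneg M) (pow_nonneg (hapos n).le 3)))]
      _ = ENNReal.ofReal ((1 + M ^ 2) / 2 * ε) := by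
          congr 1
          have hεne : ε ≠ 0 := ne_of_gt hε0
          rw [← hε2]
          field_simp
  -- summability of the bounds
  have haS : ∀ n, a n ≤ ∑' k, a k := fun n => Summable.le_tsum hasum n fun j _ => (hapos j).le
  have hεsum : Summable fun n => (1 + M ^ 2) / 2 * (a n * Real.sqrt (a n)) := by
    refine Summable.mul_left _ ?_
    refine Summable.of_nonneg_of_le
      (fun n => mul_nonneg (hapos n).le (Real.sqrt_nonneg _)) (fun n => ?_)
      (hasum.mul_left (Real.sqrt (∑' k, a k)))
    calc a n * Real.sqrt (a n) = Real.sqrt (a n) * a n := mul_comm _ _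
      _ ≤ Real.sqrt (∑' k, a k) * a n :=
          mul_le_mul_of_nonneg_right (Real.sqrt_le_sqrt (haS n)) (hapos n).le
  have hbmeas : ∀ n : ℕ, Measurable fun ω => ENNReal.ofReal |X (n+1) ω - X n ω| :=
    fun n => (continuous_abs.measurable.comp ((hXm (n+1)).sub (hXm n))).ennreal_ofReal
  have hsum_b : (∑' n, ∫⁻ ω, ENNReal.ofReal |X (n+1) ω - X n ω| ∂ℙ) ≠ ⊤ := by
    refine ne_top_of_le_ne_top ?_ (ENNReal.tsum_le_tsum keyabs)
    rw [← ENNReal.ofReal_tsum_of_nonneg (fun n => mul_nonneg (by positivity)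
      (mul_nonneg (hapos n).le (Real.sqrt_nonneg _))) hεsum]
    exact ENNReal.ofReal_ne_top
  have hae_sum : ∀ᵐ ω ∂ℙ, (∑' n, ENNReal.ofReal |X (n+1) ω - X n ω|) < ⊤ := by
    refine ae_lt_top' (Measurable.ennreal_tsum hbmeas).aemeasurable ?_
    rw [lintegral_tsum fun n => (hbmeas n).aemeasurable]
    exact hsum_b
  -- conclusion
  filter_upwards [hae_sum] with ω hω
  have hsummable : Summable fun n => |X (n+1) ω - X n ω| := by
    have ht := ENNReal.summable_toReal hω.ne
    refine ht.congr fun n => ?_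
    exact ENNReal.toReal_ofReal (abs_nonneg _)
  have hcauchy : CauchySeq fun n => X n ω := by
    refine cauchySeq_of_summable_dist ?_
    refine hsummable.congr fun n => ?_
    rw [Real.dist_eq, abs_sub_comm]
  obtain ⟨l, hl⟩ := cauchySeq_tendsto_of_complete hcauchy
  refine ⟨l, ?_⟩
  have : (fun n : ℕ => ∫ x in D, f n x ω * g x ∂volume) = fun n => X n ω :=
    funext fun n => hDK n ω
  rw [this]
  exact hl
end
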